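/- arXiv:2507.21180 — 5 statements merged into one kernel-verified Lean document; each statement's English description precedes it below -/
import Mathlib

section
/- Absolute simultaneity S is not a concept of relativistic spacetime, i.e., the binary relation S on ℝ⁴ is not first-order definable (without parameters) in the structure RelST = ⟨ℝ⁴, λ⟩; consequently Con(RelST) ⊊ Con(LClassST). -/
/-!
A Lorentz boost is an automorphism of `⟨ℝ⁴, λ⟩` that moves two simultaneous events to
non-simultaneous ones, while automorphisms preserve every relation definable without parameters.
On the other hand every `λ`-formula is an `⟨S, λ⟩`-formula, and `S` is atomic there.
-/

open FirstOrder Language Function Set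

/-- Spacetime points: elements of ℝ⁴. -/
abbrev Pt : Type := Fin 4 → ℝ

/-- Lightlike relatedness λ. -/
def lightlike (p q : Pt) : Prop :=
  (p 0 - q 0) ^ 2 = (p 1 - q 1) ^ 2 + (p 2 - q 2) ^ 2 + (p 3 - q 3) ^ 2

/-- Absolute simultaneity S. -/
def simul (p q : Pt) : Prop := p 0 = q 0

/-- The language of relativistic spacetime: one binary relation symbol. -/
def relLang : Language :=
  { Functions := fun _ => Empty, Relations := fun m => PLift (m = 2) }

/-- Relativistic spacetime RelST = ⟨ℝ⁴, λ⟩. -/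
def relStr : relLang.Structure Pt where
  funMap := fun f => f.elim
  RelMap := fun r v =>
    lightlike (v (Fin.cast r.down.symm 0)) (v (Fin.cast r.down.symm 1))

/-- The language of late classical spacetime: two binary relation symbols. -/
def classLang : Language :=
  { Functions := fun _ => Empty, Relations := fun m => PLift (m = 2) ⊕ PLift (m = 2) }

/-- Late classical spacetime LClassST = ⟨ℝ⁴, S, λ⟩. -/
def classStr : classLang.Structure Pt where
  funMap := fun f => f.elim
  RelMap := fun r v =>
    match r with
    | .inl ⟨h⟩ => simul (v (Fin.cast h.symm 0)) (v (Fin.cast h.symm 1))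
    | .inr ⟨h⟩ => lightlike (v (Fin.cast h.symm 0)) (v (Fin.cast h.symm 1))

/-- `ConOf L str R` : the `n`-ary relation `R` on ℝ⁴ is a concept of the structure
`⟨ℝ⁴; str⟩`, i.e. first-order definable without parameters. -/
def ConOf (L : Language) (str : L.Structure Pt) {n : ℕ} (R : Set (Fin n → Pt)) : Prop :=
  letI := str
  (∅ : Set Pt).Definable L R


/-- Absolute simultaneity as a binary concept (a set of 2-tuples of points). -/
def simulSet : Set (Fin 2 → Pt) := {v | simul (v 0) (v 1)}


theorem Set.Definable.comp_equiv_mem_iff {L : Language} {M α : Type*} [L.Structure M]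
    {s : Set (α → M)} (hs : (∅ : Set M).Definable L s) (g : L.Equiv M M) (v : α → M) :
    g ∘ v ∈ s ↔ v ∈ s := by
  obtain ⟨φ, rfl⟩ := Set.empty_definable_iff.1 hs
  exact StrongHomClass.realize_formula g φ

/-- The Lorentz boost along the `x`-axis with velocity `3/5`, so `γ = 5/4` and `γv = 3/4`. -/
noncomputable def boost : Pt ≃ Pt where
  toFun p := ![(5 * p 0 - 3 * p 1) / 4, (5 * p 1 - 3 * p 0) / 4, p 2, p 3]
  invFun p := ![(5 * p 0 + 3 * p 1) / 4, (5 * p 1 + 3 * p 0) / 4, p 2, p 3]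
  left_inv p := by
    ext i
    fin_cases i <;> simp only [Fin.isValue, Matrix.cons_val_zero, Matrix.cons_val_one,
      Matrix.cons_val, Fin.zero_eta, Fin.mk_one, Fin.reduceFinMk] <;> ring
  right_inv p := by
    ext i
    fin_cases i <;> simp only [Fin.isValue, Matrix.cons_val_zero, Matrix.cons_val_one,
      Matrix.cons_val, Fin.zero_eta, Fin.mk_one, Fin.reduceFinMk] <;> ring

theorem lightlike_boost_iff (p q : Pt) : lightlike (boost p) (boost q) ↔ lightlike p q := by
  -- `γ² - (γv)² = 1`
  have interval_eq : (boost p 0 - boost q 0) ^ 2 - (boost p 1 - boost q 1) ^ 2 =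
      (p 0 - q 0) ^ 2 - (p 1 - q 1) ^ 2 := by
    simp only [boost, Equiv.coe_fn_mk, Matrix.cons_val]
    ring
  change (boost p 0 - boost q 0) ^ 2 =
      (boost p 1 - boost q 1) ^ 2 + (p 2 - q 2) ^ 2 + (p 3 - q 3) ^ 2 ↔ _
  unfold lightlike
  constructor <;> intro h <;> linarith

theorem not_simul_boost : ¬ simul (boost 0) (boost ![0, 1, 0, 0]) := by
  norm_num [simul, boost]

noncomputable def boostAut : letI := relStr; relLang.Equiv Pt Pt :=
  letI := relStr
  { toEquiv := boost
    map_fun' := fun f => f.elim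
    map_rel' := by
      rintro _ ⟨rfl⟩ v
      exact lightlike_boost_iff (v 0) (v 1) }

theorem not_conOf_relST_simulSet : ¬ ConOf relLang relStr simulSet := by
  let _ := relStr
  intro h
  have : simul (boost 0) (boost ![0, 1, 0, 0]) :=
    (h.comp_equiv_mem_iff boostAut ![0, ![0, 1, 0, 0] ]).2 (by simp [simulSet, simul])
  exact not_simul_boost this

theorem conOf_classST_simulSet : ConOf classLang classStr simulSet := by
  let _ := classStr
  refine Set.empty_definable_iff.2
    ⟨Relations.formula₂ (Sum.inl ⟨rfl⟩) (Term.var 0) (Term.var 1), ?_⟩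
  ext v
  exact Iff.rfl

def relToClass : relLang →ᴸ classLang where
  onFunction _ f := f
  onRelation _ r := Sum.inr r

instance : letI := relStr; letI := classStr; relToClass.IsExpansionOn Pt :=
  letI := relStr; letI := classStr
  { map_onFunction := fun f => f.elim
    map_onRelation := by
      rintro _ ⟨rfl⟩ v
      rfl }

/-- Absolute simultaneity `S` is not a concept of relativistic spacetime;
consequently `Con(RelST) ⊊ Con(LClassST)`. -/
theorem simul_not_concept_of_relST :
    ¬ ConOf relLang relStr simulSet ∧
    ((∀ (m : ℕ) (R : Set (Fin m → Pt)), ConOf relLang relStr R → ConOf classLang classStr R) ∧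
      (∃ (m : ℕ) (R : Set (Fin m → Pt)),
        ConOf classLang classStr R ∧ ¬ ConOf relLang relStr R)) :=
  ⟨not_conOf_relST_simulSet,
    fun _ _ hR => letI := relStr; letI := classStr; hR.map_expansion relToClass,
    2, simulSet, conOf_classST_simulSet, not_conOf_relST_simulSet⟩
end

section
/- (Alexandrov–Zeeman) The automorphism group of relativistic spacetime equals the set of compositions of scalings with Poincaré transformations: a bijection f : ℝ⁴ → ℝ⁴ respects lightlike relatedness λ if and only if f = D ∘ P for some scaling D and Poincaré transformation P. -/
/-- Squared Minkowski length. -/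
def sqMink (p : Pt) : ℝ := p 0 ^ 2 - p 1 ^ 2 - p 2 ^ 2 - p 3 ^ 2

/-- Squared Euclidean length. -/
def sqEucl (p : Pt) : ℝ := p 0 ^ 2 + p 1 ^ 2 + p 2 ^ 2 + p 3 ^ 2

/-- Translations of ℝ⁴. -/
def IsTranslation (τ : Pt → Pt) : Prop := ∃ b : Pt, ∀ p, τ p = p + b

/-- Lorentz transformations: bijective linear maps preserving squared Minkowski length. -/
def IsLorentz (L : Pt → Pt) : Prop :=
  IsLinearMap ℝ L ∧ Function.Bijective L ∧ ∀ p, sqMink (L p) = sqMink p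

/-- Poincaré transformations: translations composed with Lorentz transformations. -/
def IsPoincare (P : Pt → Pt) : Prop :=
  ∃ τ L, IsTranslation τ ∧ IsLorentz L ∧ P = τ ∘ L

/-- Euclidean isometries: translations composed with bijective linear maps preserving
squared Euclidean length. -/
def IsEuclIsom (A : Pt → Pt) : Prop :=
  ∃ τ L, IsTranslation τ ∧ IsLinearMap ℝ L ∧ Function.Bijective L ∧
    (∀ p, sqEucl (L p) = sqEucl p) ∧ A = τ ∘ L

/-- Vertical lines: lines parallel to the time axis. -/
def IsVerticalLine (ℓ : Set Pt) : Prop :=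
  ∃ q : Pt, ℓ = {p | p 1 = q 1 ∧ p 2 = q 2 ∧ p 3 = q 3}

/-- Trivial transformations: Euclidean isometries taking vertical lines to vertical lines. -/
def IsTrivial (A : Pt → Pt) : Prop :=
  IsEuclIsom A ∧ ∀ ℓ, IsVerticalLine ℓ → IsVerticalLine (A '' ℓ)

/-- Scalings: maps `p ↦ a • p` with `a ≠ 0`. -/
def IsScaling (D : Pt → Pt) : Prop := ∃ a : ℝ, a ≠ 0 ∧ ∀ p, D p = a • p

/-- The point (1,0,0,0). -/
def unitTime : Pt := fun i => if i = 0 then 1 else 0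

/-- Orthochronous maps: maps not changing the direction of time. -/
def Orthochronous (A : Pt → Pt) : Prop := A unitTime 0 > A 0 0

/-- The set of Poincaré transformations. -/
def Poi : Set (Pt → Pt) := {P | IsPoincare P}

/-- The set of orthochronous Poincaré transformations. -/
def PoiUp : Set (Pt → Pt) := {P | IsPoincare P ∧ Orthochronous P}

/-- The set of trivial transformations. -/
def Triv : Set (Pt → Pt) := {T | IsTrivial T}

/-- The set of orthochronous trivial transformations. -/
def TrivUp : Set (Pt → Pt) := {T | IsTrivial T ∧ Orthochronous T}

/-- The set of scalings. -/
def Scal : Set (Pt → Pt) := {D | IsScaling D}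

/-- Composition of two sets of functions: `H ∘ G = {h ∘ g : h ∈ H, g ∈ G}`. -/
def setComp (H G : Set (Pt → Pt)) : Set (Pt → Pt) := {f | ∃ h ∈ H, ∃ g ∈ G, f = h ∘ g}

/-- A set of functions forms a group under composition. -/
def IsCompGroup (G : Set (Pt → Pt)) : Prop :=
  id ∈ G ∧ (∀ f ∈ G, ∀ g ∈ G, f ∘ g ∈ G) ∧
    ∀ f ∈ G, ∃ g ∈ G, f ∘ g = id ∧ g ∘ f = id

/-!
Normalise `f` to `h = f - f 0`, so that `h 0 = 0`. Three pairwise lightlike points are collinear,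
so `h` maps light lines onto light lines. For two disjoint parallel light lines, either every point
of one is lightlike to some point of the other or none is; for disjoint skew light lines neither
holds. Hence `h` keeps parallel light lines parallel, which gives the parallelogram law for
lightlike sides and then additivity, because null vectors off a hyperplane `ker φ` generate `ℝ⁴`
additively. On a light line through `0` the additive `h` acts through an additive map
`σ : ℝ → ℝ`; the lightlike relation between `s • u` and `r • a + t • v` (with `u`, `v` null and
`a` orthogonal to both) makes `σ` multiplicative, hence the identity, so `h` is linear. A linear
map preserving the light cone multiplies `sqMink` by a constant `k`, which is positive by comparing
the spacelike hyperplanes `x 0 = 0`, and `h / √k` is a Lorentz transformation.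
-/

namespace AlexandrovZeeman

open Module Function

def minkowski : LinearMap.BilinForm ℝ Pt :=
  LinearMap.mk₂ ℝ (fun u v => u 0 * v 0 - u 1 * v 1 - u 2 * v 2 - u 3 * v 3)
    (fun _ _ _ => by simp only [Pi.add_apply]; ring)
    (fun _ _ _ => by simp only [Pi.smul_apply, smul_eq_mul]; ring)
    (fun _ _ _ => by simp only [Pi.add_apply]; ring)
    (fun _ _ _ => by simp only [Pi.smul_apply, smul_eq_mul]; ring)

@[simp]
lemma minkowski_apply (u v : Pt) :
    minkowski u v = u 0 * v 0 - u 1 * v 1 - u 2 * v 2 - u 3 * v 3 := rfl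

lemma minkowski_comm (u v : Pt) : minkowski u v = minkowski v u := by
  simp only [minkowski_apply]; ring

lemma minkowski_self (u : Pt) : minkowski u u = sqMink u := by
  simp only [minkowski_apply, sqMink]; ring

lemma minkowski_unitTime (u : Pt) : minkowski u unitTime = u 0 := by
  simp [unitTime]

lemma sqMink_add (u v : Pt) :
    sqMink (u + v) = sqMink u + 2 * minkowski u v + sqMink v := by
  simp only [sqMink, minkowski_apply, Pi.add_apply]; ring

lemma sqMink_sub (u v : Pt) :
    sqMink (u - v) = sqMink u - 2 * minkowski u v + sqMink v := by
  simp only [sqMink, minkowski_apply, Pi.sub_apply]; ring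

lemma sqMink_smul (c : ℝ) (u : Pt) : sqMink (c • u) = c ^ 2 * sqMink u := by
  simp only [sqMink, Pi.smul_apply, smul_eq_mul]; ring

lemma sqMink_add_smul (u v : Pt) (t : ℝ) :
    sqMink (u + t • v) = sqMink u + 2 * t * minkowski u v + t ^ 2 * sqMink v := by
  rw [sqMink_add, sqMink_smul, map_smul, smul_eq_mul]; ring

lemma sqMink_unitTime : sqMink unitTime = 1 := by
  simp [sqMink, unitTime]

lemma lightlike_iff_sqMink_sub (p q : Pt) : lightlike p q ↔ sqMink (p - q) = 0 := by
  simp only [lightlike, sqMink, Pi.sub_apply]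
  constructor <;> intro h <;> linear_combination h

lemma sqMink_eq_neg_of_apply_zero {x : Pt} (h0 : x 0 = 0) :
    sqMink x = -(x 1 ^ 2 + x 2 ^ 2 + x 3 ^ 2) := by
  simp only [sqMink, h0]; ring

lemma sqMink_nonpos_of_apply_zero {x : Pt} (h0 : x 0 = 0) : sqMink x ≤ 0 := by
  rw [sqMink_eq_neg_of_apply_zero h0]; nlinarith [sq_nonneg (x 1), sq_nonneg (x 2), sq_nonneg (x 3)]

lemma sqMink_neg_of_apply_zero {x : Pt} (hx : x ≠ 0) (h0 : x 0 = 0) : sqMink x < 0 := by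
  refine (sqMink_nonpos_of_apply_zero h0).lt_of_ne fun hQ => hx ?_
  rw [sqMink_eq_neg_of_apply_zero h0] at hQ
  funext i
  fin_cases i <;> simp [h0] <;> nlinarith [sq_nonneg (x 1), sq_nonneg (x 2), sq_nonneg (x 3)]

lemma apply_zero_ne_zero_of_sqMink_eq_zero {x : Pt} (hx : x ≠ 0) (hQ : sqMink x = 0) :
    x 0 ≠ 0 :=
  fun h0 => (sqMink_neg_of_apply_zero hx h0).ne hQ

lemma sqMink_add_smul_unitTime {y : Pt} (h0 : y 0 = 0) (c : ℝ) :
    sqMink (y + c • unitTime) = sqMink y + c ^ 2 := by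
  rw [sqMink_add_smul, minkowski_unitTime, h0, sqMink_unitTime]; ring

lemma sq_sqrt_neg_sqMink {y : Pt} (h0 : y 0 = 0) : √(-sqMink y) ^ 2 = -sqMink y :=
  Real.sq_sqrt (neg_nonneg.mpr (sqMink_nonpos_of_apply_zero h0))

-- `v - (v 0 / u 0) • u` is null with vanishing time component, hence zero.
lemma exists_eq_smul_of_minkowski_eq_zero {u v : Pt} (hu : sqMink u = 0) (hu0 : u ≠ 0)
    (hv : sqMink v = 0) (huv : minkowski u v = 0) : ∃ c : ℝ, v = c • u := by
  have hut := apply_zero_ne_zero_of_sqMink_eq_zero hu0 hu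
  refine ⟨v 0 / u 0, not_not.mp fun hne => ?_⟩
  refine (sqMink_neg_of_apply_zero (sub_ne_zero.mpr hne) ?_).ne ?_
  · simp [hut]
  · rw [sqMink_sub, sqMink_smul, map_smul, minkowski_comm, huv, hu, hv]; simp

lemma minkowski_ne_zero_of_linearIndependent {u v : Pt} (hu : sqMink u = 0)
    (hv : sqMink v = 0) (huv : LinearIndependent ℝ ![u, v]) : minkowski u v ≠ 0 := by
  intro hB
  obtain ⟨c, rfl⟩ := exists_eq_smul_of_minkowski_eq_zero hu (huv.ne_zero 0) hv hB
  exact (LinearIndependent.pair_iff' (huv.ne_zero 0)).mp huv c rfl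

lemma exists_ne_zero_apply_eq_zero {K V : Type*} [Field K] [AddCommGroup V] [Module K V]
    [FiniteDimensional K V] (hV : 2 < finrank K V) (φ ψ : V →ₗ[K] K) :
    ∃ x ≠ 0, φ x = 0 ∧ ψ x = 0 := by
  have hker := LinearMap.ker_ne_bot_of_finrank_lt (f := φ.prod ψ) (by simpa using hV)
  obtain ⟨x, hx, hx0⟩ := Submodule.exists_mem_ne_zero_of_ne_bot hker
  rw [LinearMap.mem_ker] at hx
  exact ⟨x, hx0, congrArg Prod.fst hx, congrArg Prod.snd hx⟩

def nullOff (φ : Pt →ₗ[ℝ] ℝ) : Set Pt := {w | sqMink w = 0 ∧ φ w ≠ 0}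

lemma linearIndependent_of_mem_nullOff {φ : Pt →ₗ[ℝ] ℝ} {v w : Pt} (hw : w ∈ nullOff φ)
    (hv0 : v ≠ 0) (hφv : φ v = 0) : LinearIndependent ℝ ![w, v] := by
  refine LinearIndependent.pair_iff.mpr fun s t hst => ?_
  have hs : s = 0 := by
    simpa [hφv, hw.2] using congrArg φ hst
  subst hs
  exact ⟨rfl, by simpa [hv0] using hst⟩

lemma smul_mem_closure_nullOff {φ : Pt →ₗ[ℝ] ℝ} {w : Pt} (hw : w ∈ nullOff φ) (c : ℝ) :
    c • w ∈ AddSubmonoid.closure (nullOff φ) := by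
  rcases eq_or_ne c 0 with rfl | hc
  · simp
  · exact AddSubmonoid.subset_closure ⟨by rw [sqMink_smul, hw.1, mul_zero], by simp [hc, hw.2]⟩

-- With `s` the spatial part of `y` and `ρ` its length, `y` is a combination of the null vectors
-- `s ± ρ • unitTime`, on which `φ` takes the value `φ y`.
lemma mem_closure_nullOff_of_apply_ne_zero {φ : Pt →ₗ[ℝ] ℝ} (hφ : φ unitTime = 0) {y : Pt}
    (hy : φ y ≠ 0) : y ∈ AddSubmonoid.closure (nullOff φ) := by
  set s := y - y 0 • unitTime
  have hs0 : s 0 = 0 := by simp [s, unitTime]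
  have hφs : φ s = φ y := by simp [s, hφ]
  set ρ := √(-sqMink s)
  have hρ : ρ ≠ 0 := by
    have hs : s ≠ 0 := fun h => hy (by rw [← hφs, h, map_zero])
    exact (Real.sqrt_pos.mpr (neg_pos.mpr (sqMink_neg_of_apply_zero hs hs0))).ne'
  have hnull : ∀ c : ℝ, c ^ 2 = ρ ^ 2 → s + c • unitTime ∈ nullOff φ := fun c hc =>
    ⟨by rw [sqMink_add_smul_unitTime hs0, hc, sq_sqrt_neg_sqMink hs0]; ring,
      by simpa [hφ, hφs] using hy⟩
  have hy_eq : y = ((ρ + y 0) / (2 * ρ)) • (s + ρ • unitTime)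
      + ((ρ - y 0) / (2 * ρ)) • (s + (-ρ) • unitTime) :=
    calc y = s + y 0 • unitTime := by simp [s]
      _ = _ := by match_scalars <;> field_simp <;> ring
  rw [hy_eq]
  exact add_mem (smul_mem_closure_nullOff (hnull ρ rfl) _)
    (smul_mem_closure_nullOff (hnull (-ρ) (neg_sq ρ)) _)

lemma closure_nullOff_eq_top {φ : Pt →ₗ[ℝ] ℝ} (hφ : φ unitTime = 0) {z : Pt}
    (hz : z ∈ nullOff φ) : AddSubmonoid.closure (nullOff φ) = ⊤ := by
  refine eq_top_iff.mpr fun x _ => ?_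
  by_cases hx : φ x = 0
  · rw [← sub_add_cancel x z]
    exact add_mem (mem_closure_nullOff_of_apply_ne_zero hφ (by simpa [hx] using hz.2))
      (AddSubmonoid.subset_closure hz)
  · exact mem_closure_nullOff_of_apply_ne_zero hφ hx

lemma exists_nullOff (v : Pt) :
    ∃ φ : Pt →ₗ[ℝ] ℝ, φ v = 0 ∧ φ unitTime = 0 ∧ (nullOff φ).Nonempty := by
  obtain ⟨e, he, he0, hev⟩ :=
    exists_ne_zero_apply_eq_zero (by simp) (LinearMap.proj (R := ℝ) (φ := fun _ : Fin 4 => ℝ) 0)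
      (minkowski v)
  simp only [LinearMap.proj_apply] at he0
  refine ⟨minkowski e, by rwa [minkowski_comm], by rw [minkowski_unitTime, he0],
    e + √(-sqMink e) • unitTime, ?_, ?_⟩
  · rw [sqMink_add_smul_unitTime he0, sq_sqrt_neg_sqMink he0]; ring
  · rw [map_add, map_smul, minkowski_unitTime, he0, smul_zero, add_zero, minkowski_self]
    exact (sqMink_neg_of_apply_zero he he0).ne

lemma closure_null_eq_top : AddSubmonoid.closure {w : Pt | sqMink w = 0} = ⊤ := by
  obtain ⟨φ, -, hφ, z, hz⟩ := exists_nullOff 0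
  exact eq_top_mono (AddSubmonoid.closure_mono fun w hw => hw.1) (closure_nullOff_eq_top hφ hz)

def PreservesLightlike (h : Pt → Pt) : Prop :=
  ∀ p q, lightlike p q ↔ lightlike (h p) (h q)

lemma PreservesLightlike.sqMink_sub_eq_zero_iff {h : Pt → Pt} (hN : PreservesLightlike h)
    (p q : Pt) : sqMink (h p - h q) = 0 ↔ sqMink (p - q) = 0 := by
  rw [← lightlike_iff_sqMink_sub, ← lightlike_iff_sqMink_sub]
  exact (hN p q).symm

lemma PreservesLightlike.symm {h : Pt ≃ Pt} (hN : PreservesLightlike h) :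
    PreservesLightlike h.symm := fun p q => by
  simpa using (hN (h.symm p) (h.symm q)).symm

def line (p v : Pt) : Set Pt := Set.range fun t : ℝ => p + t • v

lemma mem_line_of_sqMink_sub {a b c : Pt} (hab : sqMink (b - a) = 0) (hac : sqMink (c - a) = 0)
    (hbc : sqMink (c - b) = 0) (hne : b ≠ a) : c ∈ line a (b - a) := by
  have horth : minkowski (b - a) (c - a) = 0 := by
    have := sqMink_sub (c - a) (b - a)
    rw [sub_sub_sub_cancel_right, hbc, hac, hab, minkowski_comm] at this
    linarith
  obtain ⟨t, ht⟩ := exists_eq_smul_of_minkowski_eq_zero hab (sub_ne_zero.mpr hne) hac horth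
  exact ⟨t, by show a + t • (b - a) = c; rw [← ht, add_sub_cancel]⟩

lemma image_line_subset {h : Pt → Pt} (hN : PreservesLightlike h) (hinj : Injective h)
    {v : Pt} (hv : sqMink v = 0) (hv0 : v ≠ 0) (p : Pt) :
    h '' line p v ⊆ line (h p) (h (p + v) - h p) := by
  have hnull : ∀ s t : ℝ, sqMink (h (p + s • v) - h (p + t • v)) = 0 := fun s t => by
    rw [hN.sqMink_sub_eq_zero_iff, add_sub_add_left_eq_sub, ← sub_smul, sqMink_smul, hv,
      mul_zero]
  rintro _ ⟨_, ⟨t, rfl⟩, rfl⟩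
  refine mem_line_of_sqMink_sub (by simpa using hnull 1 0) (by simpa using hnull t 0)
    (by simpa using hnull t 1) (hinj.ne (by simpa using hv0))

lemma image_line {h : Pt ≃ Pt} (hN : PreservesLightlike h) {v : Pt} (hv : sqMink v = 0)
    (hv0 : v ≠ 0) (p : Pt) : h '' line p v = line (h p) (h (p + v) - h p) := by
  refine (image_line_subset hN h.injective hv hv0 p).antisymm ?_
  have hd : sqMink (h (p + v) - h p) = 0 := by
    rwa [hN.sqMink_sub_eq_zero_iff, add_sub_cancel_left]
  have hd0 : h (p + v) - h p ≠ 0 := sub_ne_zero.mpr (h.injective.ne (by simpa using hv0))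
  have := image_line_subset hN.symm h.symm.injective hd hd0 (h p)
  rwa [add_sub_cancel, Equiv.symm_apply_apply, Equiv.symm_apply_apply, add_sub_cancel_left,
    Equiv.symm_image_subset] at this

def AllOrNoneLightlike (ℓ₁ ℓ₂ : Set Pt) : Prop :=
  (∀ x ∈ ℓ₁, ∃ y ∈ ℓ₂, sqMink (x - y) = 0) ∨ ∀ x ∈ ℓ₁, ∀ y ∈ ℓ₂, sqMink (x - y) ≠ 0

lemma AllOrNoneLightlike.image {h : Pt → Pt} (hN : PreservesLightlike h) {ℓ₁ ℓ₂ : Set Pt}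
    (hℓ : AllOrNoneLightlike ℓ₁ ℓ₂) : AllOrNoneLightlike (h '' ℓ₁) (h '' ℓ₂) := by
  rcases hℓ with hall | hnone
  · left
    rintro _ ⟨x, hx, rfl⟩
    obtain ⟨y, hy, hxy⟩ := hall x hx
    exact ⟨h y, Set.mem_image_of_mem h hy, (hN.sqMink_sub_eq_zero_iff x y).mpr hxy⟩
  · right
    rintro _ ⟨x, hx, rfl⟩ _ ⟨y, hy, rfl⟩
    rw [Ne, hN.sqMink_sub_eq_zero_iff]
    exact hnone x hx y hy

lemma allOrNoneLightlike_line_line {v : Pt} (hv : sqMink v = 0) (p q : Pt) :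
    AllOrNoneLightlike (line p v) (line q v) := by
  have hval : ∀ t s : ℝ, sqMink (p + t • v - (q + s • v))
      = sqMink (p - q) + 2 * (t - s) * minkowski (p - q) v := fun t s => by
    rw [show p + t • v - (q + s • v) = p - q + (t - s) • v by module, sqMink_add_smul, hv]
    ring
  by_cases hB : minkowski (p - q) v = 0
  · by_cases hQ : sqMink (p - q) = 0
    · left
      rintro _ ⟨t, rfl⟩
      exact ⟨q + t • v, ⟨t, rfl⟩, by rw [hval, hQ, hB]; ring⟩
    · right
      rintro _ ⟨t, rfl⟩ _ ⟨s, rfl⟩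
      rw [hval, hB]
      simpa using hQ
  · left
    rintro _ ⟨t, rfl⟩
    refine ⟨_, ⟨t + sqMink (p - q) / (2 * minkowski (p - q) v), rfl⟩, ?_⟩
    rw [hval]
    field_simp
    ring

-- On disjoint skew light lines `x + s • u` and `y + t • w`, the point with
-- `minkowski (x - y + s • u) w = 0` has no partner, any other point has one.
lemma not_allOrNoneLightlike_line_line {u w : Pt} (hu : sqMink u = 0) (hw : sqMink w = 0)
    (huw : LinearIndependent ℝ ![u, w]) {x y : Pt} (hdisj : Disjoint (line x u) (line y w)) :
    ¬ AllOrNoneLightlike (line x u) (line y w) := by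
  have hB := minkowski_ne_zero_of_linearIndependent hu hw huw
  set c := fun s : ℝ => x - y + s • u
  have hval : ∀ s t : ℝ, sqMink (x + s • u - (y + t • w))
      = sqMink (c s) - 2 * t * minkowski (c s) w := fun s t => by
    rw [show x + s • u - (y + t • w) = c s + (-t) • w by simp only [c]; module,
      sqMink_add_smul, hw]
    ring
  have hcB : ∀ s, minkowski (c s) w = minkowski (x - y) w + s * minkowski u w := fun s => by
    simp only [c, map_add, map_smul, LinearMap.add_apply, LinearMap.smul_apply, smul_eq_mul]
  set s₀ := -minkowski (x - y) w / minkowski u w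
  have hs₀ : minkowski (c s₀) w = 0 := by rw [hcB]; simp only [s₀]; field_simp; ring
  rintro (hall | hnone)
  · obtain ⟨_, ⟨t, rfl⟩, hnull⟩ := hall _ ⟨s₀, rfl⟩
    rw [hval, hs₀, mul_zero, sub_zero] at hnull
    obtain ⟨k, hk⟩ := exists_eq_smul_of_minkowski_eq_zero hw (huw.ne_zero 1) hnull
      (by rwa [minkowski_comm])
    refine Set.disjoint_left.mp hdisj ⟨s₀, rfl⟩ ⟨k, ?_⟩
    simp only [c] at hk
    linear_combination (norm := module) -hk
  · have hB₁ : minkowski (c (s₀ + 1)) w ≠ 0 := by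
      rw [hcB, add_mul, one_mul, ← add_assoc, ← hcB, hs₀, zero_add]; exact hB
    refine hnone _ ⟨s₀ + 1, rfl⟩ _ ⟨sqMink (c (s₀ + 1)) / (2 * minkowski (c (s₀ + 1)) w), rfl⟩ ?_
    rw [hval]
    field_simp
    ring

section Additivity

variable {h : Pt ≃ Pt}

lemma map_add_sub_ne_zero {v : Pt} (hv0 : v ≠ 0) (p : Pt) : h (p + v) - h p ≠ 0 :=
  sub_ne_zero.mpr (h.injective.ne (by simpa using hv0))

lemma exists_map_add_sub_eq_smul (hN : PreservesLightlike h) {v : Pt} (hv : sqMink v = 0)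
    (hv0 : v ≠ 0) {p q : Pt} (hdisj : Disjoint (line p v) (line q v)) :
    ∃ k : ℝ, h (q + v) - h q = k • (h (p + v) - h p) := by
  have hd : ∀ r, sqMink (h (r + v) - h r) = 0 := fun r => by
    rwa [hN.sqMink_sub_eq_zero_iff, add_sub_cancel_left]
  by_contra! hne
  have hli : LinearIndependent ℝ ![h (p + v) - h p, h (q + v) - h q] :=
    (LinearIndependent.pair_iff' (map_add_sub_ne_zero hv0 p)).mpr fun k hk => hne k hk.symm
  have hall := (allOrNoneLightlike_line_line hv p q).image hN
  rw [image_line hN hv hv0, image_line hN hv hv0] at hall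
  refine not_allOrNoneLightlike_line_line (hd p) (hd q) hli ?_ hall
  rw [← image_line hN hv hv0, ← image_line hN hv hv0]
  exact (Set.disjoint_image_iff h.injective).mpr hdisj

lemma disjoint_line_add {u v : Pt} (huv : LinearIndependent ℝ ![u, v]) (p : Pt) :
    Disjoint (line p v) (line (p + u) v) := by
  refine Set.disjoint_left.mpr ?_
  rintro _ ⟨t, rfl⟩ ⟨s, hs⟩
  have := LinearIndependent.pair_iff.mp huv 1 (s - t) (by linear_combination (norm := module) hs)
  exact one_ne_zero this.1

-- The two pairs of opposite sides through `p`, `p + u`, `p + v` are parallel light lines; their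
-- images have the independent directions of `h (p + u) - h p` and `h (p + v) - h p`.
lemma map_add_add (hN : PreservesLightlike h) {u v : Pt} (hu : sqMink u = 0)
    (hv : sqMink v = 0) (huv : LinearIndependent ℝ ![u, v]) (p : Pt) :
    h (p + u + v) = h (p + u) + h (p + v) - h p := by
  have hu0 : u ≠ 0 := by simpa using huv.ne_zero 0
  have hv0 : v ≠ 0 := by simpa using huv.ne_zero 1
  have hvu : LinearIndependent ℝ ![v, u] := LinearIndependent.pair_symm_iff.mp huv
  obtain ⟨k, hk⟩ := exists_map_add_sub_eq_smul hN hv hv0 (disjoint_line_add huv p)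
  obtain ⟨k', hk'⟩ := exists_map_add_sub_eq_smul hN hu hu0 (disjoint_line_add hvu p)
  rw [add_right_comm] at hk'
  have hli : LinearIndependent ℝ ![h (p + v) - h p, h (p + u) - h p] := by
    refine (LinearIndependent.pair_iff' (map_add_sub_ne_zero hv0 p)).mpr fun c hc => ?_
    have hmem : h (p + u) ∈ h '' line p v := by
      rw [image_line hN hv hv0]
      exact ⟨c, by show h p + c • _ = _; rw [hc, add_sub_cancel]⟩
    obtain ⟨t, ht⟩ := h.injective.mem_set_image.mp hmem
    have := LinearIndependent.pair_iff.mp huv 1 (-t) (by linear_combination (norm := module) -ht)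
    exact one_ne_zero this.1
  have hcoef := LinearIndependent.pair_iff.mp hli (1 - k) (k' - 1)
    (by linear_combination (norm := module) hk - hk')
  have hk1 : k = 1 := by linarith [hcoef.1]
  rw [hk1, one_smul] at hk
  linear_combination (norm := module) hk

lemma map_add_sub_map_eq (hN : PreservesLightlike h) {v : Pt} (hv : sqMink v = 0) (p : Pt) :
    h (p + v) - h p = h v - h 0 := by
  rcases eq_or_ne v 0 with rfl | hv0
  · simp
  obtain ⟨φ, hφv, hφ, z, hz⟩ := exists_nullOff v
  have hp : p ∈ AddSubmonoid.closure (nullOff φ) := by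
    rw [closure_nullOff_eq_top hφ hz]; trivial
  suffices ∀ q, h (q + p + v) - h (q + p) = h (q + v) - h q by simpa using this 0
  induction hp using AddSubmonoid.closure_induction with
  | mem w hw =>
    intro q
    rw [map_add_add hN hw.1 hv (linearIndependent_of_mem_nullOff hw hv0 hφv)]
    abel
  | zero => simp
  | add w₁ w₂ _ _ ih₁ ih₂ =>
    intro q
    rw [← add_assoc, ih₂, ih₁]

lemma map_add_of_map_zero (hN : PreservesLightlike h) (h0 : h 0 = 0) (x y : Pt) :
    h (x + y) = h x + h y := by
  have hy : y ∈ AddSubmonoid.closure {w : Pt | sqMink w = 0} := by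
    rw [closure_null_eq_top]; trivial
  induction hy using AddSubmonoid.closure_induction generalizing x with
  | mem w hw => rw [← sub_eq_iff_eq_add', map_add_sub_map_eq hN hw, h0, sub_zero]
  | zero => rw [add_zero, h0, add_zero]
  | add w₁ w₂ _ _ ih₁ ih₂ => rw [← add_assoc, ih₂, ih₁, ih₂, add_assoc]

end Additivity


lemma sqMink_smul_sub_smul_add_smul {u v a : Pt} (hu : sqMink u = 0) (hv : sqMink v = 0)
    (hua : minkowski a u = 0) (hva : minkowski a v = 0) (s r t : ℝ) :
    sqMink (s • u - (r • a + t • v)) = r ^ 2 * sqMink a - 2 * s * t * minkowski u v := by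
  simp only [sqMink, minkowski_apply, Pi.add_apply, Pi.sub_apply, Pi.smul_apply,
    smul_eq_mul] at *
  linear_combination s ^ 2 * hu + t ^ 2 * hv - 2 * s * r * hua + 2 * r * t * hva

lemma sqMink_ne_zero_of_minkowski_eq_zero {u v a : Pt} (hu : sqMink u = 0) (hv : sqMink v = 0)
    (huv : LinearIndependent ℝ ![u, v]) (ha0 : a ≠ 0) (hua : minkowski a u = 0)
    (hva : minkowski a v = 0) : sqMink a ≠ 0 := by
  intro ha
  obtain ⟨c, rfl⟩ := exists_eq_smul_of_minkowski_eq_zero ha ha0 hu hua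
  exact minkowski_ne_zero_of_linearIndependent hu hv huv (by simp [hva])

-- Writing `μ r² = x y`, the hypothesis gives `σ x * τ y = σ (x y) = τ (x y)` whenever
-- `x y / μ > 0`; oddness removes the sign condition, so `σ = τ` is a ring endomorphism of `ℝ`.
lemma apply_eq_self_of_mul_eq {σ τ : ℝ →+ ℝ} (hσ : σ 1 = 1) (hτ : τ 1 = 1) {μ : ℝ}
    (hμ : μ ≠ 0) {q : ℝ → ℝ} (H : ∀ s r : ℝ, s ≠ 0 → r ≠ 0 → σ s * τ (μ * r ^ 2 / s) = q r)
    (x : ℝ) : τ x = x := by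
  have key : ∀ x y : ℝ, 0 < x * y / μ → σ x * τ y = σ (x * y) ∧ τ (x * y) = σ (x * y) := by
    intro x y hxy
    have hxy0 : x * y ≠ 0 := fun h => by simp [h] at hxy
    have hx : x ≠ 0 := left_ne_zero_of_mul hxy0
    have hr : √(x * y / μ) ≠ 0 := (Real.sqrt_pos.mpr hxy).ne'
    have hr2 : μ * √(x * y / μ) ^ 2 = x * y := by rw [Real.sq_sqrt hxy.le]; field_simp
    have h₁ := H x _ hx hr
    have h₂ := H (x * y) _ hxy0 hr
    have h₃ := H 1 _ one_ne_zero hr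
    rw [hr2, mul_div_cancel_left₀ y hx] at h₁
    rw [hr2, div_self hxy0, hτ, mul_one] at h₂
    rw [hr2, div_one, hσ, one_mul] at h₃
    exact ⟨h₁.trans h₂.symm, h₃.trans h₂.symm⟩
  have hsign : ∀ z : ℝ, z ≠ 0 → 0 < z / μ ∨ 0 < -z / μ := fun z hz => by
    rw [neg_div, neg_pos]
    exact (div_ne_zero hz hμ).lt_or_gt.symm
  have hτσ : ∀ y, τ y = σ y := by
    intro y
    rcases eq_or_ne y 0 with rfl | hy
    · simp
    rcases hsign y hy with hpos | hneg
    · simpa using (key 1 y (by simpa using hpos)).2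
    · simpa using (key 1 (-y) (by simpa using hneg)).2
  have hmul : ∀ x y, σ (x * y) = σ x * σ y := by
    intro x y
    rcases eq_or_ne (x * y) 0 with h0 | h0
    · rcases mul_eq_zero.mp h0 with rfl | rfl <;> simp
    rw [← hτσ y]
    rcases hsign (x * y) h0 with hpos | hneg
    · exact (key x y hpos).1.symm
    · have := (key x (-y) (by rwa [mul_neg])).1
      simp only [map_neg, mul_neg, neg_inj] at this
      exact this.symm
  let F : ℝ →+* ℝ := { σ with map_one' := hσ, map_mul' := hmul }
  rw [hτσ]
  exact RingHom.congr_fun (Subsingleton.elim F (RingHom.id ℝ)) x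

section Homogeneity

variable {h : Pt ≃+ Pt}

lemma sqMink_map_eq_zero_iff (hN : PreservesLightlike h) (x : Pt) :
    sqMink (h x) = 0 ↔ sqMink x = 0 := by
  simpa using hN.sqMink_sub_eq_zero_iff x 0

lemma exists_addMonoidHom_map_smul (hN : PreservesLightlike h) {w : Pt} (hw : sqMink w = 0)
    (hw0 : w ≠ 0) : ∃ σ : ℝ →+ ℝ, σ 1 = 1 ∧ ∀ t, h (t • w) = σ t • h w := by
  have hline : h '' line 0 w = line (h 0) (h (0 + w) - h 0) :=
    image_line (h := h.toEquiv) hN hw hw0 0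
  rw [zero_add, map_zero, sub_zero] at hline
  have hex : ∀ t : ℝ, ∃ c : ℝ, h (t • w) = c • h w := fun t => by
    obtain ⟨c, hc⟩ : h (t • w) ∈ line 0 (h w) := hline ▸ ⟨t • w, ⟨t, by simp⟩, rfl⟩
    exact ⟨c, by simpa using hc.symm⟩
  choose σ hσ using hex
  have hinj := smul_left_injective ℝ (by simpa using hw0 : h w ≠ 0)
  refine ⟨AddMonoidHom.mk' σ fun s t => hinj ?_, hinj ?_, hσ⟩
  · show σ (s + t) • h w = (σ s + σ t) • h w
    rw [add_smul, ← hσ, ← hσ, ← hσ, add_smul, map_add]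
  · show σ 1 • h w = (1 : ℝ) • h w
    rw [← hσ, one_smul, one_smul]

-- Otherwise the image of the light line `y + ℝ x`, all of whose points are not lightlike to `0`,
-- would contain a point of the light cone of `0 = h 0`.
lemma minkowski_map_eq_zero (hN : PreservesLightlike h) {x y : Pt} (hx : sqMink x = 0)
    (hx0 : x ≠ 0) (hy : sqMink y ≠ 0) (hxy : minkowski y x = 0) :
    minkowski (h y) (h x) = 0 := by
  by_contra hB
  have hline : h '' line y x = line (h y) (h (y + x) - h y) :=
    image_line (h := h.toEquiv) hN hx hx0 y
  rw [map_add, add_sub_cancel_left] at hline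
  obtain ⟨_, ⟨s, rfl⟩, hs⟩ : h y + (-sqMink (h y) / (2 * minkowski (h y) (h x))) • h x ∈
      h '' line y x := hline ▸ ⟨_, rfl⟩
  have hnull : sqMink (h (y + s • x)) = 0 := by
    rw [hs, sqMink_add_smul, (sqMink_map_eq_zero_iff hN x).mpr hx]
    field_simp
    ring
  rw [sqMink_map_eq_zero_iff hN, sqMink_add_smul, hxy, hx] at hnull
  exact hy (by simpa using hnull)

-- `s • u - (r • a + t • v)` is null for `t = μ r² / s`, `μ = sqMink a / (2 minkowski u v)`.
lemma mul_map_smul_eq (hN : PreservesLightlike h) {u v a : Pt} (hu : sqMink u = 0)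
    (hv : sqMink v = 0) (hu0 : u ≠ 0) (hv0 : v ≠ 0) (huv : minkowski u v ≠ 0)
    (hua : minkowski a u = 0) (hva : minkowski a v = 0) (ha : sqMink a ≠ 0) {σ τ : ℝ →+ ℝ}
    (hσ : ∀ t, h (t • u) = σ t • h u) (hτ : ∀ t, h (t • v) = τ t • h v) {s r : ℝ} (hs : s ≠ 0)
    (hr : r ≠ 0) :
    2 * minkowski (h u) (h v) * (σ s * τ (sqMink a / (2 * minkowski u v) * r ^ 2 / s))
      = sqMink (h (r • a)) := by
  set t := sqMink a / (2 * minkowski u v) * r ^ 2 / s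
  have hra : sqMink (r • a) ≠ 0 := by
    rw [sqMink_smul]; exact mul_ne_zero (pow_ne_zero 2 hr) ha
  have horth : ∀ {x}, sqMink x = 0 → x ≠ 0 → minkowski a x = 0 →
      minkowski (h (r • a)) (h x) = 0 := fun hx hx0 hax =>
    minkowski_map_eq_zero hN hx hx0 hra (by simp [hax])
  have hnull : sqMink (s • u - (r • a + t • v)) = 0 := by
    rw [sqMink_smul_sub_smul_add_smul hu hv hua hva]
    simp only [t]
    field_simp
    ring
  rw [← sqMink_map_eq_zero_iff hN, map_sub, map_add, hσ, hτ, ← one_smul ℝ (h (r • a)),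
    sqMink_smul_sub_smul_add_smul ((sqMink_map_eq_zero_iff hN u).mpr hu)
      ((sqMink_map_eq_zero_iff hN v).mpr hv) (horth hu hu0 hua) (horth hv hv0 hva)] at hnull
  linear_combination -hnull

lemma map_smul_of_sqMink_eq_zero (hN : PreservesLightlike h) {v : Pt} (hv : sqMink v = 0)
    (t : ℝ) : h (t • v) = t • h v := by
  rcases eq_or_ne v 0 with rfl | hv0
  · simp
  obtain ⟨φ, hφv, -, u, hu⟩ := exists_nullOff v
  have huv := linearIndependent_of_mem_nullOff hu hv0 hφv
  have hu0 : u ≠ 0 := by simpa using huv.ne_zero 0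
  have hB := minkowski_ne_zero_of_linearIndependent hu.1 hv huv
  obtain ⟨a, ha0, hau, hav⟩ :=
    exists_ne_zero_apply_eq_zero (by simp) (minkowski u) (minkowski v)
  rw [minkowski_comm] at hau hav
  have ha := sqMink_ne_zero_of_minkowski_eq_zero hu.1 hv huv ha0 hau hav
  obtain ⟨σ, hσ1, hσ⟩ := exists_addMonoidHom_map_smul hN hu.1 hu0
  obtain ⟨τ, hτ1, hτ⟩ := exists_addMonoidHom_map_smul hN hv hv0
  have hrel := fun {s r : ℝ} => mul_map_smul_eq hN hu.1 hv hu0 hv0 hB hau hav ha hσ hτ (s := s)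
    (r := r)
  have hK : 2 * minkowski (h u) (h v) ≠ 0 := fun hK => by
    have := hrel one_ne_zero one_ne_zero
    rw [hK, zero_mul, eq_comm, sqMink_map_eq_zero_iff hN, one_smul] at this
    exact ha this
  rw [hτ, apply_eq_self_of_mul_eq hσ1 hτ1 (div_ne_zero ha (mul_ne_zero two_ne_zero hB))
    (q := fun r => sqMink (h (r • a)) / (2 * minkowski (h u) (h v)))
    (fun s r hs hr => by rw [eq_div_iff hK, ← hrel hs hr, mul_comm]) t]

end Homogeneity

lemma isLinearMap_of_preservesLightlike {h : Pt ≃ Pt} (hN : PreservesLightlike h)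
    (h0 : h 0 = 0) : IsLinearMap ℝ h := by
  have hadd := map_add_of_map_zero hN h0
  let h' : Pt ≃+ Pt := { h with map_add' := hadd }
  refine ⟨hadd, fun c x => ?_⟩
  have hx : x ∈ AddSubmonoid.closure {w : Pt | sqMink w = 0} := by
    rw [closure_null_eq_top]; trivial
  induction hx using AddSubmonoid.closure_induction with
  | mem w hw => exact map_smul_of_sqMink_eq_zero (h := h') hN hw c
  | zero => rw [smul_zero, h0, smul_zero]
  | add x y _ _ hx hy => rw [smul_add, hadd, hadd, hx, hy, smul_add]

-- Both `y ± √(-sqMink y) • unitTime` are null for the spatial part `y` of `x`.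
lemma sqMink_map_eq_mul (L : Pt →ₗ[ℝ] Pt) (hL : ∀ x, sqMink x = 0 → sqMink (L x) = 0)
    (x : Pt) : sqMink (L x) = sqMink (L unitTime) * sqMink x := by
  set y := x - x 0 • unitTime
  have hy0 : y 0 = 0 := by simp [y, unitTime]
  have hx : x = y + x 0 • unitTime := by simp [y]
  set ρ := √(-sqMink y)
  have hρ : ρ ^ 2 = -sqMink y := sq_sqrt_neg_sqMink hy0
  have hexp : ∀ c : ℝ, sqMink (L (y + c • unitTime)) = sqMink (L y)
      + 2 * c * minkowski (L y) (L unitTime) + c ^ 2 * sqMink (L unitTime) := fun c => by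
    rw [map_add, map_smul, sqMink_add_smul]
  have hnull : ∀ c : ℝ, c ^ 2 = ρ ^ 2 → sqMink (L (y + c • unitTime)) = 0 := fun c hc =>
    hL _ (by rw [sqMink_add_smul_unitTime hy0, hc, hρ]; ring)
  have hp := hnull ρ rfl
  have hm := hnull (-ρ) (neg_sq ρ)
  rw [hexp] at hp hm
  have hB : x 0 * minkowski (L y) (L unitTime) = 0 := by
    rcases eq_or_ne ρ 0 with hρ0 | hρ0
    · have : y = 0 := by
        by_contra hy
        have := sqMink_neg_of_apply_zero hy hy0
        rw [hρ0] at hρ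
        linarith
      simp [this]
    · have : ρ * minkowski (L y) (L unitTime) = 0 := by linear_combination (hp - hm) / 4
      simp [(mul_eq_zero.mp this).resolve_left hρ0]
  have e₁ : sqMink (L x) = sqMink (L (y + x 0 • unitTime)) := by rw [← hx]
  have e₂ : sqMink x = sqMink (y + x 0 • unitTime) := by rw [← hx]
  rw [e₁, e₂, hexp, sqMink_add_smul_unitTime hy0]
  linear_combination (hp + hm) / 2 + 2 * hB - sqMink (L unitTime) * hρ

lemma sqMink_map_unitTime_pos (L : Pt →ₗ[ℝ] Pt) (hL : Injective L)
    (hQ : ∀ x, sqMink (L x) = sqMink (L unitTime) * sqMink x) : 0 < sqMink (L unitTime) := by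
  obtain ⟨x, hx0, hxt, hLxt⟩ := exists_ne_zero_apply_eq_zero (by simp)
    (LinearMap.proj (R := ℝ) (φ := fun _ : Fin 4 => ℝ) 0)
    ((LinearMap.proj (R := ℝ) (φ := fun _ : Fin 4 => ℝ) 0).comp L)
  simp only [LinearMap.proj_apply, LinearMap.comp_apply] at hxt hLxt
  have h₁ := sqMink_neg_of_apply_zero hx0 hxt
  have h₂ := sqMink_neg_of_apply_zero ((map_ne_zero_iff L hL).mpr hx0) hLxt
  rw [hQ] at h₂
  nlinarith

lemma exists_isLorentz_smul {h : Pt ≃ Pt} (hN : PreservesLightlike h) (h0 : h 0 = 0) :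
    ∃ a : ℝ, a ≠ 0 ∧ IsLorentz fun p => a⁻¹ • h p := by
  set L := (isLinearMap_of_preservesLightlike hN h0).mk' h
  have hQ := sqMink_map_eq_mul L fun x hx => by
    simpa [L, h0] using (hN.sqMink_sub_eq_zero_iff x 0).mpr (by simpa using hx)
  have hk := sqMink_map_unitTime_pos L h.injective hQ
  set a := √(sqMink (L unitTime))
  have ha : a ≠ 0 := (Real.sqrt_pos.mpr hk).ne'
  refine ⟨a, ha, (a⁻¹ • L).isLinear,
    (LinearEquiv.smulOfNeZero ℝ Pt a⁻¹ (inv_ne_zero ha)).bijective.comp h.bijective, fun p => ?_⟩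
  rw [sqMink_smul, show sqMink (h p) = _ from hQ p, inv_pow, Real.sq_sqrt hk.le]
  field_simp

lemma IsPoincare.sqMink_sub {P : Pt → Pt} (hP : IsPoincare P) (p q : Pt) :
    sqMink (P p - P q) = sqMink (p - q) := by
  obtain ⟨τ, L, ⟨b, hb⟩, ⟨hlin, -, hL⟩, rfl⟩ := hP
  simp only [Function.comp_apply, hb, add_sub_add_right_eq_sub]
  rw [← hL (p - q)]
  exact congrArg sqMink ((IsLinearMap.mk' L hlin).map_sub p q).symm

lemma preservesLightlike_comp {D P : Pt → Pt} (hD : D ∈ Scal) (hP : P ∈ Poi) :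
    PreservesLightlike (D ∘ P) := fun p q => by
  obtain ⟨a, ha, hD⟩ := hD
  rw [lightlike_iff_sqMink_sub, lightlike_iff_sqMink_sub, Function.comp_apply,
    Function.comp_apply, hD, hD, ← smul_sub, sqMink_smul, IsPoincare.sqMink_sub hP]
  simp [ha]

lemma exists_mem_scal_mem_poi {f : Pt ≃ Pt} (hf : PreservesLightlike f) :
    ∃ D ∈ Scal, ∃ P ∈ Poi, ⇑f = D ∘ P := by
  set h := f.trans (Equiv.subRight (f 0))
  have hN : PreservesLightlike h := fun p q => by
    simp only [h, Equiv.trans_apply, Equiv.subRight_apply, lightlike_iff_sqMink_sub,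
      sub_sub_sub_cancel_right]
    exact (hf.sqMink_sub_eq_zero_iff p q).symm
  obtain ⟨a, ha, hL⟩ := exists_isLorentz_smul hN (sub_self (f 0))
  refine ⟨(a • ·), ⟨a, ha, fun _ => rfl⟩, (· + a⁻¹ • f 0) ∘ fun p => a⁻¹ • h p,
    ⟨_, _, ⟨_, fun _ => rfl⟩, hL, rfl⟩, ?_⟩
  funext p
  simp [h, smul_add, smul_smul, ha]

end AlexandrovZeeman

/-- **Alexandrov–Zeeman theorem.** A bijection of ℝ⁴ respects lightlike relatedness
if and only if it is a composition of a scaling and a Poincaré transformation;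
that is, Aut(RelST) = Scal ∘ Poi. -/
theorem alexandrov_zeeman (f : Pt → Pt) (hf : Function.Bijective f) :
    (∀ p q : Pt, lightlike p q ↔ lightlike (f p) (f q)) ↔
      ∃ D ∈ Scal, ∃ P ∈ Poi, f = D ∘ P := by
  refine ⟨fun hlight => AlexandrovZeeman.exists_mem_scal_mem_poi (f := .ofBijective f hf) hlight,
    ?_⟩
  rintro ⟨D, hD, P, hP, rfl⟩
  exact AlexandrovZeeman.preservesLightlike_comp hD hP
end

section
/- The automorphism group of late classical spacetime equals the set of compositions of scalings with trivial transformations: a bijection f : ℝ⁴ → ℝ⁴ respects both lightlike relatedness λ and absolute simultaneity S if and only if f = D ∘ T for some scaling D and trivial transformation T. -/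
/-!
Simultaneity makes `f` act on time alone, by a bijection `g` of `ℝ`. An event simultaneous with
the midpoint of two events on a vertical line is lightlike to both or to neither, so their images
are centres of the same spheres in `ℝ³`; hence `f` acts on space alone too, by a bijection `Φ` of
`ℝ³`, and lightlikeness becomes `|t - s| = ‖v - w‖ ↔ |g t - g s| = ‖Φ v - Φ w‖`. Thus `Φ` maps
the pairs at distance `d` exactly onto the pairs at distance `ρ d := |g d - g 0|`. Counting
intersection points of two spheres shows that `ρ` is strictly increasing and additive, hence
`ρ d = c d`, so `g` and `Φ` are isometries up to the common factor `c`, i.e. `f` is `c` times a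
trivial transformation. Conversely trivial transformations fix the time axis direction up to sign
and preserve Euclidean length, hence preserve Minkowski length and simultaneity.
-/

open Module Metric Set Function
open scoped RealInnerProductSpace

section NormedSpace

variable {E : Type*} [NormedAddCommGroup E] [NormedSpace ℝ E]

theorem dist_smul_smul_of_norm_eq_one {u : E} (hu : ‖u‖ = 1) (s t : ℝ) :
    dist (s • u) (t • u) = |s - t| := by
  rw [dist_eq_norm, ← sub_smul, norm_smul, hu, mul_one, Real.norm_eq_abs]

theorem eq_of_sphere_subset_sphere {A B : E} {r r' : ℝ} (hr : 0 < r)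
    (h : sphere A r ⊆ sphere B r') : A = B := by
  by_contra hAB
  set d := ‖A - B‖
  have hd : 0 < d := norm_pos_iff.2 (sub_ne_zero.2 hAB)
  -- the two points of `sphere A r` on the line `AB` lie at distances `d + r` and `|d - r|` from `B`
  have key : ∀ s : ℝ, |s| = r → |d + s| = r' := by
    intro s hs
    have hmem : A + (s / d) • (A - B) ∈ sphere A r := by
      simp [d, norm_smul, hs, hd.ne']
    rw [← mem_sphere.1 (h hmem), dist_eq_norm,
      show A + (s / d) • (A - B) - B = ((d + s) / d) • (A - B) by
        rw [add_div, div_self hd.ne', add_smul, one_smul]; abel,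
      norm_smul, Real.norm_eq_abs, abs_div, abs_of_pos hd, div_mul_cancel₀ _ hd.ne']
  have h₁ := key r (abs_of_pos hr)
  have h₂ := key (-r) (by rw [abs_neg, abs_of_pos hr])
  rw [abs_of_pos (by positivity), ← h₂, ← sub_eq_add_neg] at h₁
  have := abs_sub_lt_iff.2 (⟨by linarith, by linarith⟩ : d - r < d + r ∧ r - d < d + r)
  exact this.ne h₁.symm

end NormedSpace

section InnerProductSpace

variable {E : Type*} [NormedAddCommGroup E] [InnerProductSpace ℝ E]

theorem exists_norm_eq_one_inner_eq_zero [FiniteDimensional ℝ E] (hE : 2 ≤ finrank ℝ E)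
    (u : E) : ∃ e : E, ‖e‖ = 1 ∧ ⟪u, e⟫ = 0 := by
  set K := ℝ ∙ u
  have hK : finrank ℝ K ≤ 1 := by
    simpa using finrank_span_le_card (R := ℝ) ({u} : Set E)
  have : Nontrivial Kᗮ := Module.finrank_pos_iff (R := ℝ).1 (by
    have := K.finrank_add_finrank_orthogonal; omega)
  obtain ⟨e, he⟩ := exists_norm_eq Kᗮ zero_le_one
  exact ⟨e, he, K.inner_right_of_mem_orthogonal (Submodule.mem_span_singleton_self u) e.2⟩

theorem add_smul_sub_add_smul_mem_sphere_inter_sphere {A B e : E} {a b t y : ℝ} (ha : 0 ≤ a)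
    (hb : 0 ≤ b) (he : ‖e‖ = 1) (heAB : ⟪B - A, e⟫ = 0)
    (hA : t ^ 2 * dist A B ^ 2 + y ^ 2 = a ^ 2)
    (hB : (1 - t) ^ 2 * dist A B ^ 2 + y ^ 2 = b ^ 2) :
    A + t • (B - A) + y • e ∈ sphere A a ∩ sphere B b := by
  have hnorm : ∀ z : ℝ, ‖z • (B - A) + y • e‖ ^ 2 = z ^ 2 * dist A B ^ 2 + y ^ 2 := by
    intro z
    rw [norm_add_sq_real, real_inner_smul_left, real_inner_smul_right, heAB, norm_smul,
      norm_smul, ← dist_eq_norm', he, Real.norm_eq_abs, Real.norm_eq_abs, mul_pow, mul_pow,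
      sq_abs, sq_abs]
    ring
  constructor
  · rw [mem_sphere, dist_eq_norm, add_assoc, add_sub_cancel_left,
      ← sq_eq_sq₀ (norm_nonneg _) ha, hnorm, hA]
  · rw [mem_sphere, dist_eq_norm, ← sq_eq_sq₀ (norm_nonneg _) hb,
      show A + t • (B - A) + y • e - B = (t - 1) • (B - A) + y • e by module, hnorm, ← hB]
    ring

/-- The spheres meet along the circle of the points `A + x • (B - A) + y • e`, `y ^ 2 = h`,
for a unit vector `e ⊥ B - A`. -/
theorem exists_smul_add_smul_mem_sphere_inter_sphere [FiniteDimensional ℝ E]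
    (hE : 2 ≤ finrank ℝ E) {A B : E} {a b : ℝ} (hAB : A ≠ B) (h₁ : |a - b| ≤ dist A B)
    (h₂ : dist A B ≤ a + b) :
    ∃ x h : ℝ, ∃ e : E, e ≠ 0 ∧ 0 ≤ h ∧ ((|a - b| < dist A B ∧ dist A B < a + b) → 0 < h) ∧
      ∀ y, y ^ 2 = h → A + x • (B - A) + y • e ∈ sphere A a ∩ sphere B b := by
  set D := dist A B
  have hD : 0 < D := dist_pos.2 hAB
  obtain ⟨e, he, heAB⟩ := exists_norm_eq_one_inner_eq_zero hE (B - A)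
  obtain ⟨hab₁, hab₂⟩ := abs_le.1 h₁
  obtain ⟨x, hx⟩ : ∃ x, 2 * D ^ 2 * x = D ^ 2 + a ^ 2 - b ^ 2 :=
    ⟨_, mul_div_cancel₀ _ (by positivity)⟩
  refine ⟨x, (D + a - b) * (D - a + b) * ((a + b - D) * (a + b + D)) / (4 * D ^ 2), e,
    norm_ne_zero_iff.1 (by rw [he]; exact one_ne_zero), ?_, fun ⟨h₁, h₂⟩ => ?_, fun y hy => ?_⟩
  · have : 0 ≤ D + a - b := by linarith
    have : 0 ≤ D - a + b := by linarith
    have : 0 ≤ a + b - D := by linarith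
    have : 0 ≤ a + b + D := by linarith
    exact div_nonneg (by positivity) (by positivity)
  · obtain ⟨h₁, h₁'⟩ := abs_lt.1 h₁
    have : 0 < D + a - b := by linarith
    have : 0 < D - a + b := by linarith
    have : 0 < a + b - D := by linarith
    have : 0 < a + b + D := by linarith
    exact div_pos (by positivity) (by positivity)
  · apply add_smul_sub_add_smul_mem_sphere_inter_sphere (by linarith) (by linarith) he heAB
    · rw [hy]; field_simp
      linear_combination (2 * D ^ 2 * x + D ^ 2 + a ^ 2 - b ^ 2) * hx
    · rw [hy]; field_simp
      linear_combination (2 * D ^ 2 * x - 3 * D ^ 2 + a ^ 2 - b ^ 2) * hx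

theorem sphere_inter_sphere_nonempty [FiniteDimensional ℝ E] (hE : 2 ≤ finrank ℝ E) {A B : E}
    {a b : ℝ} (hAB : A ≠ B) (h₁ : |a - b| ≤ dist A B) (h₂ : dist A B ≤ a + b) :
    (sphere A a ∩ sphere B b).Nonempty := by
  obtain ⟨x, h, e, -, hh, -, hmem⟩ := exists_smul_add_smul_mem_sphere_inter_sphere hE hAB h₁ h₂
  exact ⟨_, hmem _ (Real.sq_sqrt hh)⟩

theorem sphere_inter_sphere_nontrivial [FiniteDimensional ℝ E] (hE : 2 ≤ finrank ℝ E) {A B : E}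
    {a b : ℝ} (hAB : A ≠ B) (h₁ : |a - b| < dist A B) (h₂ : dist A B < a + b) :
    (sphere A a ∩ sphere B b).Nontrivial := by
  obtain ⟨x, h, e, he, -, hpos, hmem⟩ :=
    exists_smul_add_smul_mem_sphere_inter_sphere hE hAB h₁.le h₂.le
  have hh := hpos ⟨h₁, h₂⟩
  refine ⟨_, hmem _ (Real.sq_sqrt hh.le), _, hmem (-√h) (by rw [neg_sq, Real.sq_sqrt hh.le]),
    fun heq => he ?_⟩
  have := smul_left_injective ℝ he (add_left_cancel heq)
  linarith [Real.sqrt_pos.2 hh]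

end InnerProductSpace

theorem eq_mul_of_map_add_of_nonneg {ρ : ℝ → ℝ}
    (hadd : ∀ a b, 0 ≤ a → 0 ≤ b → ρ (a + b) = ρ a + ρ b) (hnonneg : ∀ a, 0 ≤ a → 0 ≤ ρ a)
    {d : ℝ} (hd : 0 ≤ d) : ρ d = ρ 1 * d := by
  have hmono : MonotoneOn ρ (Ici 0) := fun a ha b hb hab => by
    have := hadd a (b - a) ha (sub_nonneg.2 hab)
    rw [add_sub_cancel] at this
    linarith [hnonneg (b - a) (sub_nonneg.2 hab)]
  have hnsmul : ∀ n : ℕ, ∀ a, 0 ≤ a → ρ (n * a) = n * ρ a := by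
    intro n a ha
    induction n with
    | zero => simpa using hadd 0 0 le_rfl le_rfl
    | succ n ih => rw [Nat.cast_succ, add_mul, one_mul, hadd _ _ (by positivity) ha, ih]; ring
  -- comparing `n * d` with the integers around it pins `ρ d` to within `ρ 1 / n` of `ρ 1 * d`
  have hclose : ∀ n : ℕ, n * |ρ d - ρ 1 * d| ≤ ρ 1 := by
    intro n
    set k := ⌊n * d⌋₊
    have hk : (k : ℝ) ≤ n * d := Nat.floor_le (by positivity)
    have hk' : n * d ≤ (k + 1 : ℕ) := by push_cast; exact (Nat.lt_floor_add_one _).le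
    have h₁ := hmono (mem_Ici.2 (Nat.cast_nonneg _)) (by simp; positivity) hk
    have h₂ := hmono (by simp; positivity) (mem_Ici.2 (Nat.cast_nonneg _)) hk'
    rw [hnsmul _ _ hd, ← mul_one (k : ℝ), hnsmul _ _ zero_le_one] at h₁
    rw [hnsmul _ _ hd, ← mul_one ((k + 1 : ℕ) : ℝ), hnsmul _ _ zero_le_one] at h₂
    have h1 := hnonneg 1 zero_le_one
    push_cast at hk' h₂
    rw [← abs_of_nonneg (Nat.cast_nonneg (α := ℝ) n), ← abs_mul, abs_le]
    constructor <;>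
      nlinarith [mul_le_mul_of_nonneg_left hk h1, mul_le_mul_of_nonneg_left hk' h1]
  by_contra hne
  obtain ⟨n, hn⟩ := exists_nat_gt (ρ 1 / |ρ d - ρ 1 * d|)
  have hpos : 0 < |ρ d - ρ 1 * d| := abs_pos.2 (sub_ne_zero.2 hne)
  rw [div_lt_iff₀ hpos] at hn
  linarith [hclose n]

section TransformsDist

variable {E : Type*} [NormedAddCommGroup E]

def TransformsDist (Φ : E → E) (ρ : ℝ → ℝ) : Prop :=
  ∀ v w : E, ∀ d, 0 ≤ d → (dist v w = d ↔ dist (Φ v) (Φ w) = ρ d)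

namespace TransformsDist

variable {Φ : E → E} {ρ : ℝ → ℝ} (h : TransformsDist Φ ρ)
include h

theorem dist_apply (v w : E) : dist (Φ v) (Φ w) = ρ (dist v w) :=
  (h v w _ dist_nonneg).1 rfl

theorem apply_zero : ρ 0 = 0 := by
  simpa using (h.dist_apply 0 0).symm

theorem image_sphere_inter_sphere (hΦ : Surjective Φ) (P Q : E) {a b : ℝ} (ha : 0 ≤ a)
    (hb : 0 ≤ b) : Φ '' (sphere P a ∩ sphere Q b) = sphere (Φ P) (ρ a) ∩ sphere (Φ Q) (ρ b) := by
  ext C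
  obtain ⟨c, rfl⟩ := hΦ C
  simp only [mem_image, mem_inter_iff, mem_sphere]
  constructor
  · rintro ⟨c', ⟨hP, hQ⟩, hc'⟩
    rw [← hc', h.dist_apply, h.dist_apply, hP, hQ]
    exact ⟨rfl, rfl⟩
  · rintro ⟨hP, hQ⟩
    exact ⟨c, ⟨(h c P a ha).2 hP, (h c Q b hb).2 hQ⟩, rfl⟩

variable [NormedSpace ℝ E] [Nontrivial E]

theorem nonneg {d : ℝ} (hd : 0 ≤ d) : 0 ≤ ρ d := by
  obtain ⟨v, hv⟩ := exists_norm_eq E hd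
  rw [← (h v 0 d hd).1 (by rwa [dist_zero_right])]
  exact dist_nonneg

theorem injOn : InjOn ρ (Ici 0) := by
  intro d hd d' hd' hρ
  obtain ⟨v, hv⟩ := exists_norm_eq E hd
  have hvd : dist v 0 = d := by rwa [dist_zero_right]
  rw [← hvd]
  exact (h v 0 d' hd').2 (by rw [h.dist_apply, hvd, hρ])

theorem pos {d : ℝ} (hd : 0 < d) : 0 < ρ d :=
  (h.nonneg hd.le).lt_of_ne fun h0 =>
    hd.ne (h.injOn (mem_Ici.2 le_rfl) (mem_Ici.2 hd.le) (h.apply_zero.trans h0))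

theorem add_le {a b : ℝ} (ha : 0 ≤ a) (hb : 0 ≤ b) : ρ (a + b) ≤ ρ a + ρ b := by
  obtain ⟨u, hu⟩ := exists_norm_eq E zero_le_one
  have hd := dist_smul_smul_of_norm_eq_one hu
  calc ρ (a + b) = dist (Φ ((a + b) • u)) (Φ ((0 : ℝ) • u)) := by
        rw [h.dist_apply, hd, sub_zero, abs_of_nonneg (add_nonneg ha hb)]
    _ ≤ dist (Φ ((a + b) • u)) (Φ (a • u)) + dist (Φ (a • u)) (Φ ((0 : ℝ) • u)) :=
        dist_triangle _ _ _
    _ = ρ a + ρ b := by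
        rw [h.dist_apply, h.dist_apply, hd, hd, add_sub_cancel_left, sub_zero, abs_of_nonneg ha,
          abs_of_nonneg hb, add_comm]

end TransformsDist

end TransformsDist

namespace TransformsDist

variable {E : Type*} [NormedAddCommGroup E] [InnerProductSpace ℝ E] [FiniteDimensional ℝ E]
  (hE : 2 ≤ finrank ℝ E) {Φ : E → E} (hΦ : Surjective Φ) {ρ : ℝ → ℝ} (h : TransformsDist Φ ρ)
include hE hΦ h

theorem le_add_of_le_add {a b D : ℝ} (ha : 0 < a) (hb : 0 < b) (hD : 0 < D)
    (h₁ : |ρ a - ρ b| ≤ ρ D) (h₂ : ρ D ≤ ρ a + ρ b) : D ≤ a + b := by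
  have := nontrivial_of_finrank_pos (R := ℝ) (M := E) (by omega)
  obtain ⟨Q, hQ⟩ := exists_norm_eq E hD.le
  have hPQ : dist (Φ 0) (Φ Q) = ρ D := by rw [h.dist_apply, dist_zero_left, hQ]
  obtain ⟨C, hC⟩ := sphere_inter_sphere_nonempty hE
    (dist_pos.1 (hPQ ▸ h.pos hD)) (hPQ ▸ h₁) (hPQ ▸ h₂)
  rw [← h.image_sphere_inter_sphere hΦ 0 Q ha.le hb.le] at hC
  obtain ⟨c, ⟨hc₀, hcQ⟩, -⟩ := hC
  calc D = dist 0 Q := by rw [dist_zero_left, hQ]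
    _ ≤ dist 0 c + dist c Q := dist_triangle _ _ _
    _ = a + b := by rw [dist_comm, mem_sphere.1 hc₀, mem_sphere.1 hcQ]

theorem strictMonoOn : StrictMonoOn ρ (Ici 0) := by
  have := nontrivial_of_finrank_pos (R := ℝ) (M := E) (by omega)
  intro e he d hd hed
  rcases (mem_Ici.1 he).eq_or_lt with rfl | he
  · rw [h.apply_zero]; exact h.pos hed
  by_contra hle
  have := h.add_le (half_pos he).le (half_pos he).le
  rw [add_halves] at this
  have := h.le_add_of_le_add hE hΦ (half_pos he) (half_pos he) (he.trans hed)
    (by rw [sub_self, abs_zero]; exact h.nonneg (mem_Ici.1 hd)) (by linarith)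
  linarith

theorem map_add {a b : ℝ} (ha : 0 ≤ a) (hb : 0 ≤ b) : ρ (a + b) = ρ a + ρ b := by
  have := nontrivial_of_finrank_pos (R := ℝ) (M := E) (by omega)
  rcases ha.eq_or_lt with rfl | ha
  · rw [h.apply_zero, zero_add, zero_add]
  rcases hb.eq_or_lt with rfl | hb
  · rw [h.apply_zero, add_zero, add_zero]
  refine (h.add_le ha.le hb.le).antisymm (not_lt.1 fun hlt => ?_)
  have hρa := h.strictMonoOn hE hΦ (mem_Ici.2 ha.le) (mem_Ici.2 (by positivity))
    (lt_add_of_pos_right a hb)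
  have hρb := h.strictMonoOn hE hΦ (mem_Ici.2 hb.le) (mem_Ici.2 (by positivity))
    (lt_add_of_pos_left b ha)
  obtain ⟨Q, hQ⟩ := exists_norm_eq E (add_pos ha hb).le
  have hPQ : dist (Φ 0) (Φ Q) = ρ (a + b) := by rw [h.dist_apply, dist_zero_left, hQ]
  have hnt := sphere_inter_sphere_nontrivial hE (dist_pos.1 (hPQ ▸ h.pos (add_pos ha hb)))
    (hPQ ▸ abs_sub_lt_iff.2 ⟨by linarith [h.nonneg hb.le], by linarith [h.nonneg ha.le]⟩)
    (hPQ ▸ hlt)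
  rw [← h.image_sphere_inter_sphere hΦ 0 Q ha.le hb.le] at hnt
  -- but a point at distances `a`, `b` from the ends of a segment of length `a + b` lies on it
  refine (nontrivial_of_image _ _ hnt).not_subsingleton fun c hc c' hc' => ?_
  have hdist : dist 0 Q = a + b := by rw [dist_zero_left, hQ]
  have hmem : ∀ c ∈ sphere 0 a ∩ sphere Q b, c = AffineMap.lineMap 0 Q (a / (a + b)) := by
    rintro c ⟨hc₀, hcQ⟩
    apply eq_lineMap_of_dist_eq_mul_of_dist_eq_mul
    · rw [dist_comm, mem_sphere.1 hc₀, hdist]; field_simp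
    · rw [mem_sphere.1 hcQ, hdist]; field_simp; ring
  rw [hmem c hc, hmem c' hc']

theorem exists_eq_mul : ∃ c > 0, ∀ d, 0 ≤ d → ρ d = c * d := by
  have := nontrivial_of_finrank_pos (R := ℝ) (M := E) (by omega)
  exact ⟨ρ 1, h.pos one_pos, fun d hd =>
    eq_mul_of_map_add_of_nonneg (fun a b ha hb => h.map_add hE hΦ ha hb) (fun a => h.nonneg) hd⟩

end TransformsDist

theorem exists_linearIsometryEquiv_of_dist_eq_mul {E : Type*} [NormedAddCommGroup E]
    [NormedSpace ℝ E] [StrictConvexSpace ℝ E] [FiniteDimensional ℝ E] {Φ : E → E} {c : ℝ}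
    (hc : 0 < c) (hΦ : ∀ v w, dist (Φ v) (Φ w) = c * dist v w) :
    ∃ A : E ≃ₗᵢ[ℝ] E, ∀ v, Φ v = c • A v + Φ 0 := by
  have hiso : Isometry fun v => c⁻¹ • (Φ v - Φ 0) := Isometry.of_dist_eq fun v w => by
    rw [dist_smul₀, dist_sub_right, hΦ, Real.norm_eq_abs, abs_inv, abs_of_pos hc,
      inv_mul_cancel_left₀ hc.ne']
  set F := hiso.affineIsometryOfStrictConvexSpace
  refine ⟨F.linearIsometry.toLinearIsometryEquiv rfl, fun v => ?_⟩
  have hF : F.linearIsometry v = c⁻¹ • (Φ v - Φ 0) := by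
    simpa [F] using F.map_vsub v 0
  rw [LinearIsometry.coe_toLinearIsometryEquiv, hF, smul_smul, mul_inv_cancel₀ hc.ne', one_smul,
    sub_add_cancel]

abbrev E3 : Type := EuclideanSpace ℝ (Fin 3)

def timeSpaceEquiv : (ℝ × E3) ≃ₗ[ℝ] Pt :=
  ((LinearEquiv.refl ℝ ℝ).prodCongr (WithLp.linearEquiv 2 ℝ (Fin 3 → ℝ))).trans
    (Fin.consLinearEquiv ℝ fun _ => ℝ)

def spatial (p : Pt) : E3 := (timeSpaceEquiv.symm p).2

@[simp] theorem timeSpaceEquiv_apply_zero (t : ℝ) (v : E3) : timeSpaceEquiv (t, v) 0 = t := rfl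

@[simp] theorem spatial_timeSpaceEquiv (t : ℝ) (v : E3) : spatial (timeSpaceEquiv (t, v)) = v := by
  simp [spatial]

theorem timeSpaceEquiv_time_spatial (p : Pt) : timeSpaceEquiv (p 0, spatial p) = p :=
  timeSpaceEquiv.apply_symm_apply p

@[simp] theorem spatial_apply (p : Pt) (i : Fin 3) : spatial p i = p i.succ := rfl

theorem sqEucl_timeSpaceEquiv (t : ℝ) (v : E3) :
    sqEucl (timeSpaceEquiv (t, v)) = t ^ 2 + ‖v‖ ^ 2 := by
  rw [EuclideanSpace.norm_sq_eq, Fin.sum_univ_three]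
  simp only [Real.norm_eq_abs, sq_abs]
  show t ^ 2 + v 0 ^ 2 + v 1 ^ 2 + v 2 ^ 2 = _
  ring

theorem lightlike_iff_abs_sub_eq_dist {p q : Pt} :
    lightlike p q ↔ |p 0 - q 0| = dist (spatial p) (spatial q) := by
  rw [EuclideanSpace.dist_eq, Fin.sum_univ_three, lightlike, ← Real.sqrt_sq_eq_abs,
    Real.sqrt_inj (sq_nonneg _) (by positivity)]
  simp [Real.dist_eq, sq_abs]

theorem lightlike_iff_sqMink_sub {p q : Pt} : lightlike p q ↔ sqMink (p - q) = 0 := by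
  simp only [lightlike, sqMink, Pi.sub_apply]
  constructor <;> intro h <;> linarith

theorem spatial_eq_spatial_iff {p q : Pt} :
    spatial p = spatial q ↔ p 1 = q 1 ∧ p 2 = q 2 ∧ p 3 = q 3 := by
  rw [← (WithLp.ofLp_injective 2).eq_iff, funext_iff, Fin.forall_fin_succ, Fin.forall_fin_succ,
    Fin.forall_fin_one]
  rfl

theorem isVerticalLine_iff {ℓ : Set Pt} :
    IsVerticalLine ℓ ↔ ∃ v : E3, ℓ = {p | spatial p = v} := by
  simp only [IsVerticalLine, ← spatial_eq_spatial_iff]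
  exact ⟨fun ⟨q, hq⟩ => ⟨_, hq⟩, fun ⟨v, hv⟩ => ⟨timeSpaceEquiv (0, v), by simpa using hv⟩⟩

theorem image_setOf_spatial_eq {φ : ℝ → ℝ} (hφ : Surjective φ) (ψ : E3 → E3) (v : E3) :
    (fun p => timeSpaceEquiv (φ (p 0), ψ (spatial p))) '' {p | spatial p = v} =
      {p | spatial p = ψ v} := by
  ext p
  simp only [mem_image, mem_ofPred_eq]
  constructor
  · rintro ⟨q, rfl, rfl⟩
    exact spatial_timeSpaceEquiv _ _
  · rintro hp
    obtain ⟨t, ht⟩ := hφ (p 0)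
    exact ⟨timeSpaceEquiv (t, v), by simp [ht, ← hp, timeSpaceEquiv_time_spatial]⟩

theorem mem_Triv_of_linearIsometryEquiv (A₀ : ℝ ≃ₗᵢ[ℝ] ℝ) (A : E3 ≃ₗᵢ[ℝ] E3) (b : Pt) :
    (fun p => timeSpaceEquiv (A₀ (p 0), A (spatial p)) + b) ∈ Triv := by
  set L := timeSpaceEquiv.symm.trans
    ((A₀.toLinearEquiv.prodCongr A.toLinearEquiv).trans timeSpaceEquiv)
  refine ⟨⟨(· + b), L, ⟨b, fun _ => rfl⟩, L.toLinearMap.isLinear, L.bijective, fun p => ?_, rfl⟩,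
    fun ℓ hℓ => ?_⟩
  · show sqEucl (timeSpaceEquiv (A₀ (p 0), A (spatial p))) = sqEucl p
    rw [sqEucl_timeSpaceEquiv, ← timeSpaceEquiv_time_spatial p, sqEucl_timeSpaceEquiv,
      timeSpaceEquiv_apply_zero, spatial_timeSpaceEquiv, LinearIsometryEquiv.norm_map,
      ← sq_abs, ← Real.norm_eq_abs, LinearIsometryEquiv.norm_map, Real.norm_eq_abs, sq_abs]
  · obtain ⟨v, rfl⟩ := isVerticalLine_iff.1 hℓ
    refine isVerticalLine_iff.2 ⟨A v + spatial b, ?_⟩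
    rw [← image_setOf_spatial_eq (φ := (A₀ · + b 0)) (ψ := (A · + spatial b))
      fun t => ⟨A₀.symm (t - b 0), by simp⟩]
    congr 1
    ext1 p
    conv_lhs => rw [← timeSpaceEquiv_time_spatial b, ← map_add]
    rfl

theorem IsEuclIsom.exists_linearMap {T : Pt → Pt} (hT : IsEuclIsom T) :
    ∃ L : Pt →ₗ[ℝ] Pt, (∀ x, sqEucl (L x) = sqEucl x) ∧ ∀ p q, T p - T q = L (p - q) := by
  obtain ⟨τ, L, ⟨b, hτ⟩, hL, -, hsq, rfl⟩ := hT
  refine ⟨hL.mk' L, hsq, fun p q => ?_⟩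
  simp only [comp_apply, hτ, IsLinearMap.mk'_apply, hL.map_sub]
  abel

theorem IsTrivial.exists_time_sub {T : Pt → Pt} (hT : IsTrivial T) :
    ∃ δ : ℝ, δ ^ 2 = 1 ∧ ∀ p q, T p 0 - T q 0 = δ * (p 0 - q 0) := by
  obtain ⟨L, hsq, hsub⟩ := hT.1.exists_linearMap
  -- `T` keeps the time axis vertical, so `L` maps `unitTime` to `(δ, 0, 0, 0)`
  obtain ⟨v, hv⟩ := isVerticalLine_iff.1 (hT.2 _ (isVerticalLine_iff.2 ⟨0, rfl⟩))
  have hvert : spatial (T unitTime) = spatial (T 0) := by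
    have h₁ : T unitTime ∈ T '' {p | spatial p = 0} :=
      mem_image_of_mem T (by ext i; fin_cases i <;> rfl)
    have h₀ : T 0 ∈ T '' {p | spatial p = 0} := mem_image_of_mem T (by ext i; rfl)
    rw [hv] at h₁ h₀
    exact h₁.trans h₀.symm
  have hLe : ∀ i, L unitTime i = T unitTime i - T 0 i := fun i => by
    rw [← Pi.sub_apply, hsub, sub_zero]
  obtain ⟨h₁, h₂, h₃⟩ := spatial_eq_spatial_iff.1 hvert
  have he : ∀ x, sqEucl (x + L unitTime) =
      sqEucl x + 2 * x 0 * L unitTime 0 + L unitTime 0 ^ 2 := fun x => by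
    simp only [sqEucl, Pi.add_apply, hLe 1, hLe 2, hLe 3, h₁, h₂, h₃, sub_self]
    ring
  have hδ : L unitTime 0 ^ 2 = 1 := by
    have := he 0
    rw [zero_add, hsq] at this
    simpa [sqEucl, unitTime] using this.symm
  -- polarize `sqEucl (L y) = sqEucl y` at `y = x + unitTime`
  have htime : ∀ x, L x 0 = L unitTime 0 * x 0 := fun x => by
    have := he (L x)
    rw [← map_add, hsq, hsq] at this
    simp [sqEucl, unitTime] at this
    linear_combination (-L unitTime 0 / 2) * this - (L x 0 + L unitTime 0 / 2) * hδ
  refine ⟨L unitTime 0, hδ, fun p q => ?_⟩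
  rw [← Pi.sub_apply, hsub, htime, Pi.sub_apply]

theorem sqMink_eq (x : Pt) : sqMink x = 2 * x 0 ^ 2 - sqEucl x := by
  simp only [sqMink, sqEucl]; ring

theorem sqMink_smul (a : ℝ) (x : Pt) : sqMink (a • x) = a ^ 2 * sqMink x := by
  simp only [sqMink, Pi.smul_apply, smul_eq_mul]; ring

theorem IsEuclIsom.sqEucl_sub {T : Pt → Pt} (hT : IsEuclIsom T) (p q : Pt) :
    sqEucl (T p - T q) = sqEucl (p - q) := by
  obtain ⟨L, hsq, hsub⟩ := hT.exists_linearMap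
  rw [hsub, hsq]

theorem IsTrivial.sqMink_sub {T : Pt → Pt} (hT : IsTrivial T) (p q : Pt) :
    sqMink (T p - T q) = sqMink (p - q) := by
  obtain ⟨δ, hδ, htime⟩ := hT.exists_time_sub
  rw [sqMink_eq, sqMink_eq, hT.1.sqEucl_sub, Pi.sub_apply, htime, Pi.sub_apply, mul_pow, hδ,
    one_mul]

theorem IsTrivial.simul_iff {T : Pt → Pt} (hT : IsTrivial T) {p q : Pt} :
    simul (T p) (T q) ↔ simul p q := by
  obtain ⟨δ, hδ, htime⟩ := hT.exists_time_sub
  have hδ0 : δ ≠ 0 := by rintro rfl; norm_num at hδ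
  rw [simul, simul, ← sub_eq_zero, htime, mul_eq_zero, sub_eq_zero, or_iff_right hδ0]

def PreservesLightlike (f : Pt → Pt) : Prop := ∀ p q, lightlike p q ↔ lightlike (f p) (f q)

def PreservesSimul (f : Pt → Pt) : Prop := ∀ p q, simul p q ↔ simul (f p) (f q)

theorem IsTrivial.preservesLightlike_comp {D T : Pt → Pt} (hT : IsTrivial T)
    (hD : IsScaling D) : PreservesLightlike (D ∘ T) := fun p q => by
  obtain ⟨a, ha, hDa⟩ := hD
  rw [lightlike_iff_sqMink_sub, lightlike_iff_sqMink_sub, comp_apply, comp_apply, hDa, hDa,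
    ← smul_sub, sqMink_smul, hT.sqMink_sub, mul_eq_zero, or_iff_right (pow_ne_zero 2 ha)]

theorem IsTrivial.preservesSimul_comp {D T : Pt → Pt} (hT : IsTrivial T) (hD : IsScaling D) :
    PreservesSimul (D ∘ T) := fun p q => by
  obtain ⟨a, ha, hDa⟩ := hD
  rw [← hT.simul_iff, simul, simul, comp_apply, comp_apply, hDa, hDa, Pi.smul_apply,
    Pi.smul_apply, smul_eq_mul, smul_eq_mul, mul_right_inj' ha]

def timeMap (f : Pt → Pt) (t : ℝ) : ℝ := f (timeSpaceEquiv (t, 0)) 0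

def spaceMap (f : Pt → Pt) (v : E3) : E3 := spatial (f (timeSpaceEquiv (0, v)))

section Automorphism

variable {f : Pt → Pt}

theorem PreservesSimul.apply_zero (hS : PreservesSimul f) (p : Pt) :
    f p 0 = timeMap f (p 0) :=
  (hS p (timeSpaceEquiv (p 0, 0))).1 rfl

theorem PreservesSimul.timeMap_injective (hS : PreservesSimul f) : Injective (timeMap f) :=
  fun t s h => (hS (timeSpaceEquiv (t, 0)) (timeSpaceEquiv (s, 0))).2 h

variable (hf : Surjective f) (hL : PreservesLightlike f) (hS : PreservesSimul f)
include hf hL hS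

theorem spatial_apply_eq_spatial_apply (t t' : ℝ) (v : E3) :
    spatial (f (timeSpaceEquiv (t, v))) = spatial (f (timeSpaceEquiv (t', v))) := by
  rcases eq_or_ne t t' with rfl | hne
  · rfl
  set g := timeMap f
  set s := (t + t') / 2
  have hts : |t - s| = |t' - s| := by
    rw [abs_sub_comm t]; congr 1; simp only [s]; ring
  have hr : 0 < |g t - g s| := abs_pos.2 (sub_ne_zero.2 fun h => hne (by
    have := hS.timeMap_injective h; simp only [s] at this; linarith))
  refine eq_of_sphere_subset_sphere (r' := |g t' - g s|) hr fun C hC => ?_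
  obtain ⟨q, hq⟩ := hf (timeSpaceEquiv (g s, C))
  have hq0 : q 0 = s := hS.timeMap_injective (by rw [← hS.apply_zero, hq]; rfl)
  have hlight : ∀ τ, lightlike (f (timeSpaceEquiv (τ, v))) (f q) ↔
      |g τ - g s| = dist (spatial (f (timeSpaceEquiv (τ, v)))) C := fun τ => by
    rw [lightlike_iff_abs_sub_eq_dist, hS.apply_zero, hS.apply_zero, hq0, hq,
      spatial_timeSpaceEquiv, timeSpaceEquiv_apply_zero]
  have hlight' : ∀ τ, lightlike (timeSpaceEquiv (τ, v)) q ↔ |τ - s| = dist v (spatial q) :=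
    fun τ => by rw [lightlike_iff_abs_sub_eq_dist, hq0, spatial_timeSpaceEquiv]; rfl
  rw [mem_sphere', eq_comm, ← hlight t', ← hL, hlight', ← hts, ← hlight', hL, hlight]
  exact (mem_sphere'.1 hC).symm

theorem eq_timeSpaceEquiv_timeMap_spaceMap (p : Pt) :
    f p = timeSpaceEquiv (timeMap f (p 0), spaceMap f (spatial p)) := by
  conv_lhs => rw [← timeSpaceEquiv_time_spatial (f p), ← timeSpaceEquiv_time_spatial p,
    spatial_apply_eq_spatial_apply hf hL hS _ 0]
  rw [hS.apply_zero, timeSpaceEquiv_apply_zero]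
  rfl

theorem abs_sub_eq_dist_iff (t s : ℝ) (v w : E3) :
    |t - s| = dist v w ↔ |timeMap f t - timeMap f s| = dist (spaceMap f v) (spaceMap f w) := by
  simpa only [lightlike_iff_abs_sub_eq_dist, eq_timeSpaceEquiv_timeMap_spaceMap hf hL hS,
    timeSpaceEquiv_apply_zero, spatial_timeSpaceEquiv] using
    hL (timeSpaceEquiv (t, v)) (timeSpaceEquiv (s, w))

theorem spaceMap_surjective : Surjective (spaceMap f) := fun C => by
  obtain ⟨q, hq⟩ := hf (timeSpaceEquiv (0, C))
  refine ⟨spatial q, ?_⟩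
  simpa [eq_timeSpaceEquiv_timeMap_spaceMap hf hL hS] using congrArg spatial hq

theorem transformsDist_spaceMap :
    TransformsDist (spaceMap f) fun d => |timeMap f d - timeMap f 0| := fun v w d hd => by
  have := abs_sub_eq_dist_iff hf hL hS d 0 v w
  rwa [sub_zero, abs_of_nonneg hd, eq_comm, eq_comm (a := |_ - _|)] at this

theorem exists_mem_Scal_mem_Triv_eq_comp : ∃ D ∈ Scal, ∃ T ∈ Triv, f = D ∘ T := by
  obtain ⟨c, hc, hρ⟩ := (transformsDist_spaceMap hf hL hS).exists_eq_mul
    (by rw [finrank_euclideanSpace_fin]; norm_num) (spaceMap_surjective hf hL hS)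
  have hspace : ∀ v w, dist (spaceMap f v) (spaceMap f w) = c * dist v w := fun v w => by
    rw [(transformsDist_spaceMap hf hL hS).dist_apply, hρ _ dist_nonneg]
  have htime : ∀ t s, dist (timeMap f t) (timeMap f s) = c * dist t s := fun t s => by
    obtain ⟨w, hw⟩ := exists_norm_eq E3 (abs_nonneg (t - s))
    have := (abs_sub_eq_dist_iff hf hL hS t s w 0).1 (by rw [dist_zero_right, hw])
    rw [Real.dist_eq, Real.dist_eq, this, hspace, dist_zero_right, hw]
  obtain ⟨A₀, hA₀⟩ := exists_linearIsometryEquiv_of_dist_eq_mul hc htime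
  obtain ⟨A, hA⟩ := exists_linearIsometryEquiv_of_dist_eq_mul hc hspace
  refine ⟨(c • ·), ⟨c, hc.ne', fun _ => rfl⟩, _, mem_Triv_of_linearIsometryEquiv A₀ A
    (c⁻¹ • timeSpaceEquiv (timeMap f 0, spaceMap f 0)), funext fun p => ?_⟩
  rw [comp_apply, smul_add, smul_smul, mul_inv_cancel₀ hc.ne', one_smul, ← map_smul, ← map_add,
    eq_timeSpaceEquiv_timeMap_spaceMap hf hL hS, hA₀, hA]
  rfl

end Automorphism

/-- The automorphism group of late classical spacetime is Scal ∘ Triv: a bijection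
of ℝ⁴ respects both lightlike relatedness and absolute simultaneity if and only if
it is a composition of a scaling and a trivial transformation. -/
theorem aut_lclassst_eq_scal_comp_triv (f : Pt → Pt) (hf : Function.Bijective f) :
    ((∀ p q : Pt, lightlike p q ↔ lightlike (f p) (f q)) ∧
      (∀ p q : Pt, simul p q ↔ simul (f p) (f q))) ↔
      ∃ D ∈ Scal, ∃ T ∈ Triv, f = D ∘ T := by
  constructor
  · rintro ⟨hL, hS⟩
    exact exists_mem_Scal_mem_Triv_eq_comp hf.surjective hL hS
  · rintro ⟨D, hD, T, hT, rfl⟩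
    exact ⟨hT.preservesLightlike_comp hD, hT.preservesSimul_comp hD⟩
end

section
/- Every bijection f : ℝ⁴ → ℝ⁴ that respects the collinearity relation Col (i.e., Col(p,q,r) ⟺ Col(f(p),f(q),f(r)) for all p,q,r) is the composition of a bijective linear transformation and a translation. Consequently, every automorphism of a coordinate geometry (a relational structure on ℝ⁴ in which Col is first-order definable) is affine. -/
/-!
After subtracting `f 0`, a bijection `f` of a real vector space of dimension at least two that
preserves collinearity in both directions maps every line `ℝ ∙ x` into `ℝ ∙ f x`. For independent
`x`, `y` the point `x + y` lies on the line through `2 • x` and `2 • y`, so `f (x + y)` lies in the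
span of `f x` and `f y`; and because the line through `x` and `x + y` misses `ℝ ∙ y`, the image line
through `f x` and `f (x + y)` misses `ℝ ∙ f y`, which pins the coefficient of `f x` to `1`.
Symmetrically `f (x + y) = f x + f y`, and dependent pairs are reduced to independent ones through a
third vector off their line. Then `f (a • x) = σ a • f x` for an additive and multiplicative `σ`,
i.e. a ring endomorphism of `ℝ`, which must be the identity.

For a coordinate geometry, an automorphism preserves every relation definable without parameters,
hence collinearity.
-/

open FirstOrder Language Function Set

/-- The ternary collinearity relation on ℝ⁴. -/
def Col (p q r : Pt) : Prop := (∃ a : ℝ, q = p + a • (r - p)) ∨ r = p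

/-- Collinearity as a ternary concept (a set of 3-tuples of points). -/
def ColSet : Set (Fin 3 → Pt) := {v | Col (v 0) (v 1) (v 2)}

section Collinear

open scoped Pointwise

variable {k V : Type*} [Field k] [AddCommGroup V] [Module k V]

theorem collinear_iff_exists_eq_add_smul {p q r : V} (hpr : p ≠ r) :
    Collinear k {p, q, r} ↔ ∃ a : k, q = p + a • (r - p) := by
  rw [collinear_iff_of_mem (mem_insert p _)]
  constructor
  · rintro ⟨v, hv⟩
    obtain ⟨s, rfl⟩ := hv q (by simp)
    obtain ⟨t, rfl⟩ := hv r (by simp)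
    have ht : t ≠ 0 := by rintro rfl; simp at hpr
    refine ⟨s / t, ?_⟩
    simp only [vadd_eq_add, add_comm _ p, add_sub_cancel_left, smul_smul, div_mul_cancel₀ s ht]
  · rintro ⟨a, rfl⟩
    refine ⟨r - p, ?_⟩
    simp only [mem_insert_iff, mem_singleton_iff, forall_eq_or_imp, forall_eq, vadd_eq_add]
    exact ⟨⟨0, by simp⟩, ⟨a, add_comm _ _⟩, ⟨1, by simp⟩⟩

theorem collinear_zero_iff_not_linearIndependent {x y : V} :
    Collinear k {0, x, y} ↔ ¬ LinearIndependent k ![x, y] := by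
  rcases eq_or_ne x 0 with rfl | hx
  · simpa [collinear_pair] using fun h => h.ne_zero 0 rfl
  rw [pair_comm x, collinear_iff_exists_eq_add_smul hx.symm, LinearIndependent.pair_iff' hx]
  simp [eq_comm]

theorem linearIndependent_pair_iff_notMem_span {x y : V} (hx : x ≠ 0) :
    LinearIndependent k ![x, y] ↔ y ∉ k ∙ x := by
  simp [LinearIndependent.pair_iff' hx, Submodule.mem_span_singleton]

theorem collinear_vadd_iff (v : V) (s : Set V) : Collinear k (v +ᵥ s) ↔ Collinear k s := by
  rw [Collinear, Collinear, vectorSpan_vadd]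

end Collinear

theorem col_iff_collinear (p q r : Pt) : Col p q r ↔ Collinear ℝ {p, q, r} := by
  rcases eq_or_ne p r with rfl | hpr
  · simp [Col, collinear_pair]
  · simp [Col, collinear_iff_exists_eq_add_smul hpr, hpr.symm]

structure IsCollineation (k : Type*) {V : Type*} [Field k] [AddCommGroup V] [Module k V]
    (f : V → V) : Prop where
  bijective : Bijective f
  collinear_iff : ∀ p q r, Collinear k {p, q, r} ↔ Collinear k {f p, f q, f r}

namespace IsCollineation

section Field

variable {k V : Type*} [Field k] [AddCommGroup V] [Module k V] {f : V → V}

open scoped Pointwise in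
theorem add_const (hf : IsCollineation k f) (b : V) : IsCollineation k (fun x => f x + b) where
  bijective := (Equiv.addRight b).bijective.comp hf.bijective
  collinear_iff p q r := by
    rw [hf.collinear_iff, ← collinear_vadd_iff b]
    simp only [vadd_set_insert, vadd_set_singleton, vadd_eq_add, add_comm b]

theorem linearIndependent_map (hf : IsCollineation k f) (h0 : f 0 = 0) {x y : V}
    (h : LinearIndependent k ![x, y]) : LinearIndependent k ![f x, f y] := by
  have hcol := (hf.collinear_iff 0 x y).not
  simp only [h0, collinear_zero_iff_not_linearIndependent, not_not] at hcol
  exact hcol.1 h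

theorem exists_map_smul (hf : IsCollineation k f) (h0 : f 0 = 0) {x : V} (hx : x ≠ 0) (a : k) :
    ∃ s : k, f (a • x) = s • f x := by
  have hfx : f x ≠ 0 := h0 ▸ hf.bijective.injective.ne hx
  have hcol : Collinear k {0, x, a • x} :=
    (collinear_zero_iff_not_linearIndependent).2 fun h => (LinearIndependent.pair_iff' hx).1 h a rfl
  rw [hf.collinear_iff, h0, collinear_zero_iff_not_linearIndependent,
    LinearIndependent.pair_iff' hfx] at hcol
  obtain ⟨s, hs⟩ := not_forall_not.1 hcol
  exact ⟨s, hs.symm⟩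

end Field

section Real

variable {V : Type*} [AddCommGroup V] [Module ℝ V] {f : V → V}

theorem exists_map_add_eq_smul_add_smul (hf : IsCollineation ℝ f) (h0 : f 0 = 0) {x y : V}
    (h : LinearIndependent ℝ ![x, y]) : ∃ α β : ℝ, f (x + y) = α • f x + β • f y := by
  have hx : x ≠ 0 := h.ne_zero 0
  have hy : y ≠ 0 := h.ne_zero 1
  obtain ⟨a, ha⟩ := hf.exists_map_smul h0 hx 2
  obtain ⟨b, hb⟩ := hf.exists_map_smul h0 hy 2
  have hne : (2 : ℝ) • x ≠ (2 : ℝ) • y := fun e => by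
    simpa using h.eq_of_pair (s := 2) (t := 0) (s' := 0) (t' := 2) (by simpa using e)
  have hcol : Collinear ℝ {(2 : ℝ) • x, x + y, (2 : ℝ) • y} :=
    (collinear_iff_exists_eq_add_smul hne).2 ⟨1 / 2, by module⟩
  rw [hf.collinear_iff, collinear_iff_exists_eq_add_smul (hf.bijective.injective.ne hne), ha,
    hb] at hcol
  obtain ⟨c, hc⟩ := hcol
  exact ⟨a - c * a, c * b, by rw [hc]; module⟩

theorem exists_map_add_eq_add_smul (hf : IsCollineation ℝ f) (h0 : f 0 = 0) {x y : V}
    (h : LinearIndependent ℝ ![x, y]) : ∃ β : ℝ, f (x + y) = f x + β • f y := by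
  obtain ⟨α, β, hαβ⟩ := hf.exists_map_add_eq_smul_add_smul h0 h
  refine ⟨β, ?_⟩
  suffices α = 1 by rw [hαβ, this, one_smul]
  by_contra hα
  -- Otherwise the image of the line through `x` and `x + y` would meet the image of `ℝ ∙ y`.
  set t := (1 - α)⁻¹
  have ht : t * (1 - α) = 1 := inv_mul_cancel₀ (sub_ne_zero.2 (Ne.symm hα))
  have hy : y ≠ 0 := h.ne_zero 1
  have hxy : x ≠ x + y := by simpa using hy
  obtain ⟨w, hw⟩ := hf.bijective.surjective ((t * β) • f y)
  have hw₁ : Collinear ℝ {f x, f w, f (x + y)} :=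
    (collinear_iff_exists_eq_add_smul (hf.bijective.injective.ne hxy)).2
      ⟨t, by rw [hw, hαβ]; linear_combination (norm := module) ht • f x⟩
  have hw₂ : Collinear ℝ {f 0, f w, f y} :=
    (collinear_iff_exists_eq_add_smul (hf.bijective.injective.ne hy.symm)).2
      ⟨t * β, by rw [hw, h0]; module⟩
  rw [← hf.collinear_iff, collinear_iff_exists_eq_add_smul hxy] at hw₁
  rw [← hf.collinear_iff, collinear_iff_exists_eq_add_smul hy.symm] at hw₂
  obtain ⟨c, hc⟩ := hw₁
  obtain ⟨d, hd⟩ := hw₂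
  have := h.eq_of_pair (s := 1) (t := c) (s' := 0) (t' := d)
    (by linear_combination (norm := module) hc.symm.trans hd)
  exact one_ne_zero this.1

theorem map_add_of_linearIndependent (hf : IsCollineation ℝ f) (h0 : f 0 = 0) {x y : V}
    (h : LinearIndependent ℝ ![x, y]) : f (x + y) = f x + f y := by
  obtain ⟨β, hβ⟩ := hf.exists_map_add_eq_add_smul h0 h
  obtain ⟨γ, hγ⟩ := hf.exists_map_add_eq_add_smul h0 (LinearIndependent.pair_symm_iff.1 h)
  rw [add_comm y x] at hγ
  have := (hf.linearIndependent_map h0 h).eq_of_pair (s := 1) (t := β) (s' := γ) (t' := 1)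
    (by rw [one_smul, one_smul, ← hβ, hγ, add_comm])
  rw [hβ, this.2, one_smul]

theorem map_add_of_notMem_span (hf : IsCollineation ℝ f) (h0 : f 0 = 0) {x y : V}
    (h : y ∉ ℝ ∙ x) : f (x + y) = f x + f y := by
  rcases eq_or_ne x 0 with rfl | hx
  · rw [zero_add, h0, zero_add]
  exact hf.map_add_of_linearIndependent h0 ((linearIndependent_pair_iff_notMem_span hx).2 h)

theorem map_add (hf : IsCollineation ℝ f) (h0 : f 0 = 0) (hV : 1 < Module.rank ℝ V) (x y : V) :
    f (x + y) = f x + f y := by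
  rcases eq_or_ne x 0 with rfl | hx
  · rw [zero_add, h0, zero_add]
  by_cases hy : y ∉ ℝ ∙ x
  · exact hf.map_add_of_notMem_span h0 hy
  rw [not_not] at hy
  obtain ⟨z, hz⟩ := exists_linearIndependent_pair_of_one_lt_rank hV hx
  rw [linearIndependent_pair_iff_notMem_span hx] at hz
  have hz' : ∀ u ∈ ℝ ∙ x, z ∉ ℝ ∙ u := fun u hu hzu =>
    hz (Submodule.span_singleton_le_iff_mem _ _ |>.2 hu hzu)
  have hyz : y + z ∉ ℝ ∙ x := fun h => hz (by simpa using Submodule.sub_mem _ h hy)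
  have key : f (x + y) + f z = f x + f y + f z := calc
    f (x + y) + f z = f (x + (y + z)) := by
      have hxy : x + y ∈ ℝ ∙ x := add_mem (Submodule.mem_span_singleton_self x) hy
      rw [← add_assoc, hf.map_add_of_notMem_span h0 (hz' _ hxy)]
    _ = f x + f y + f z := by
      rw [hf.map_add_of_notMem_span h0 hyz, hf.map_add_of_notMem_span h0 (hz' y hy), add_assoc]
  exact add_right_cancel key

theorem smul_coeff_eq_of_linearIndependent (hf : IsCollineation ℝ f) (h0 : f 0 = 0)
    (hV : 1 < Module.rank ℝ V) {x y : V} (h : LinearIndependent ℝ ![x, y]) {a s t : ℝ}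
    (hs : f (a • x) = s • f x) (ht : f (a • y) = t • f y) : s = t := by
  have hxy : x + y ≠ 0 := fun e =>
    one_ne_zero (LinearIndependent.pair_iff.1 h 1 1 (by rw [one_smul, one_smul, e])).1
  obtain ⟨r, hr⟩ := hf.exists_map_smul h0 hxy a
  rw [smul_add, hf.map_add h0 hV, hs, ht, hf.map_add h0 hV, smul_add] at hr
  have := (hf.linearIndependent_map h0 h).eq_of_pair hr
  exact this.1.trans this.2.symm

theorem smul_coeff_eq (hf : IsCollineation ℝ f) (h0 : f 0 = 0) (hV : 1 < Module.rank ℝ V)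
    {x y : V} (hx : x ≠ 0) (hy : y ≠ 0) {a s t : ℝ} (hs : f (a • x) = s • f x)
    (ht : f (a • y) = t • f y) : s = t := by
  by_cases hxy : LinearIndependent ℝ ![x, y]
  · exact hf.smul_coeff_eq_of_linearIndependent h0 hV hxy hs ht
  obtain ⟨z, hxz⟩ := exists_linearIndependent_pair_of_one_lt_rank hV hx
  rw [linearIndependent_pair_iff_notMem_span hx, not_not] at hxy
  have hyz : LinearIndependent ℝ ![y, z] := by
    rw [linearIndependent_pair_iff_notMem_span hx] at hxz
    rw [linearIndependent_pair_iff_notMem_span hy]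
    exact fun hz => hxz (Submodule.span_singleton_le_iff_mem _ _ |>.2 hxy hz)
  obtain ⟨r, hr⟩ := hf.exists_map_smul h0 (hxz.ne_zero 1) a
  exact (hf.smul_coeff_eq_of_linearIndependent h0 hV hxz hs hr).trans
    (hf.smul_coeff_eq_of_linearIndependent h0 hV hyz ht hr).symm

theorem exists_ringHom_map_smul (hf : IsCollineation ℝ f) (h0 : f 0 = 0)
    (hV : 1 < Module.rank ℝ V) {x : V} (hx : x ≠ 0) :
    ∃ σ : ℝ →+* ℝ, ∀ a, f (a • x) = σ a • f x := by
  have hfx : f x ≠ 0 := h0 ▸ hf.bijective.injective.ne hx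
  choose σ hσ using hf.exists_map_smul h0 hx
  have hσ_eq {a s : ℝ} (h : f (a • x) = s • f x) : σ a = s :=
    smul_left_injective ℝ hfx ((hσ a).symm.trans h)
  have hσ_zero : σ 0 = 0 := hσ_eq (by rw [zero_smul, zero_smul, h0])
  refine ⟨{ toFun := σ
            map_one' := hσ_eq (by rw [one_smul, one_smul])
            map_zero' := hσ_zero
            map_add' := fun a b => hσ_eq (by rw [add_smul, hf.map_add h0 hV, hσ, hσ, add_smul])
            map_mul' := fun a b => ?_ }, hσ⟩
  rcases eq_or_ne b 0 with rfl | hb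
  · simp only [mul_zero, hσ_zero]
  have hbx : b • x ≠ 0 := smul_ne_zero hb hx
  obtain ⟨s, hs⟩ := hf.exists_map_smul h0 hbx a
  have hsσ : s = σ a := hf.smul_coeff_eq h0 hV hbx hx hs (hσ a)
  exact hσ_eq (by rw [mul_smul, hs, hσ, smul_smul, hsσ])

theorem map_smul (hf : IsCollineation ℝ f) (h0 : f 0 = 0) (hV : 1 < Module.rank ℝ V) (a : ℝ)
    (x : V) : f (a • x) = a • f x := by
  rcases eq_or_ne x 0 with rfl | hx
  · rw [smul_zero, h0, smul_zero]
  obtain ⟨σ, hσ⟩ := hf.exists_ringHom_map_smul h0 hV hx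
  rw [hσ, Real.ringHom_apply]

theorem isLinearMap (hf : IsCollineation ℝ f) (h0 : f 0 = 0) (hV : 1 < Module.rank ℝ V) :
    IsLinearMap ℝ f :=
  ⟨hf.map_add h0 hV, hf.map_smul h0 hV⟩

theorem exists_linearEquiv (hf : IsCollineation ℝ f) (hV : 1 < Module.rank ℝ V) :
    ∃ L : V ≃ₗ[ℝ] V, ∀ x, f x = L x + f 0 := by
  have hg := hf.add_const (-f 0)
  have hlin := hg.isLinearMap (add_neg_cancel _) hV
  exact ⟨.ofBijective (IsLinearMap.mk' _ hlin) hg.bijective, fun x =>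
    (neg_add_cancel_right (f x) (f 0)).symm⟩

end Real

end IsCollineation

theorem exists_translation_linear_of_col_iff (f : Pt → Pt) (hf : Bijective f)
    (hcol : ∀ p q r : Pt, Col p q r ↔ Col (f p) (f q) (f r)) :
    ∃ τ L, IsTranslation τ ∧ IsLinearMap ℝ L ∧ Bijective L ∧ f = τ ∘ L := by
  have hf' : IsCollineation ℝ f := ⟨hf, by simpa only [col_iff_collinear] using hcol⟩
  obtain ⟨L, hL⟩ := hf'.exists_linearEquiv (by simp)
  exact ⟨(· + f 0), L, ⟨f 0, fun _ => rfl⟩, L.toLinearMap.isLinear, L.bijective, funext hL⟩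

theorem Set.Definable.equiv_comp_mem_iff {L : Language} {M : Type*} [L.Structure M] {α : Type*}
    {s : Set (α → M)} (hs : (∅ : Set M).Definable L s) (g : L.Equiv M M) (v : α → M) :
    g ∘ v ∈ s ↔ v ∈ s := by
  obtain ⟨φ, rfl⟩ := empty_definable_iff.1 hs
  exact StrongHomClass.realize_formula g φ

/-- Every bijection of ℝ⁴ respecting collinearity is a bijective linear transformation
composed with a translation; consequently, every automorphism of a coordinate geometry
(a relational structure on ℝ⁴ in which `Col` is definable) is of this affine form. -/
theorem collineations_are_affine :
    (∀ f : Pt → Pt, Function.Bijective f →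
      (∀ p q r : Pt, Col p q r ↔ Col (f p) (f q) (f r)) →
      ∃ τ L, IsTranslation τ ∧ IsLinearMap ℝ L ∧ Function.Bijective L ∧ f = τ ∘ L) ∧
    (∀ (Lg : Language) (str : Lg.Structure Pt),
      (∀ m, IsEmpty (Lg.Functions m)) → ConOf Lg str ColSet →
      ∀ f : Pt → Pt, Function.Bijective f →
        (∀ (m : ℕ) (r : Lg.Relations m) (v : Fin m → Pt),
          (letI := str; Structure.RelMap r v) ↔ (letI := str; Structure.RelMap r (f ∘ v))) →
        ∃ τ L, IsTranslation τ ∧ IsLinearMap ℝ L ∧ Function.Bijective L ∧ f = τ ∘ L) := by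
  refine ⟨exists_translation_linear_of_col_iff, fun Lg str hfun hdef f hf hrel => ?_⟩
  let g : Lg.Equiv Pt Pt :=
    { toEquiv := .ofBijective f hf
      map_fun' := fun F => (hfun _).elim F
      map_rel' := fun r v => (hrel _ r v).symm }
  exact exists_translation_linear_of_col_iff f hf fun p q r =>
    (hdef.equiv_comp_mem_iff g ![p, q, r]).symm
end

section
/- Scal∘Poi = Scal∘Poi↑: every composition of a scaling with a Poincaré transformation can be written as a composition of a scaling with an orthochronous Poincaré transformation, and conversely. -/
/-!
The time component of `L (1,0,0,0)` for a Lorentz map `L` has square `1 + x² + y² + z² ≥ 1`, so it is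
never zero: every Poincaré transformation `P` is orthochronous or `-P` is. A scaling by `a` absorbs
the sign, since `a • P = (-a) • (-P)`.
-/

lemma sqMink_neg (p : Pt) : sqMink (-p) = sqMink p := by
  simp [sqMink]

lemma sqMink_unitTime : sqMink unitTime = 1 := by
  simp [sqMink, unitTime]

namespace IsLorentz

variable {L : Pt → Pt}

lemma neg (hL : IsLorentz L) : IsLorentz (-L) := by
  obtain ⟨hlin, hbij, hmink⟩ := hL
  exact ⟨(-hlin.mk' L).isLinear, neg_involutive.bijective.comp hbij,
    fun p => (sqMink_neg (L p)).trans (hmink p)⟩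

lemma apply_unitTime_zero_ne_zero (hL : IsLorentz L) : L unitTime 0 ≠ 0 := by
  have h := (hL.2.2 unitTime).trans sqMink_unitTime
  unfold sqMink at h
  intro h0
  nlinarith [sq_nonneg (L unitTime 1), sq_nonneg (L unitTime 2), sq_nonneg (L unitTime 3)]

end IsLorentz

namespace IsPoincare

variable {P : Pt → Pt}

lemma neg (hP : IsPoincare P) : IsPoincare (-P) := by
  obtain ⟨τ, L, ⟨b, hτ⟩, hL, rfl⟩ := hP
  refine ⟨(· + -b), -L, ⟨-b, fun _ => rfl⟩, hL.neg, ?_⟩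
  funext p
  simp [hτ, add_comm]

lemma apply_unitTime_zero_ne (hP : IsPoincare P) : P unitTime 0 ≠ P 0 0 := by
  obtain ⟨τ, L, ⟨b, hτ⟩, hL, rfl⟩ := hP
  have hL0 : L 0 = 0 := (hL.1.mk' L).map_zero
  simpa [hτ, hL0] using hL.apply_unitTime_zero_ne_zero

lemma orthochronous_or_neg (hP : IsPoincare P) : Orthochronous P ∨ Orthochronous (-P) := by
  simp only [Orthochronous, Pi.neg_apply, gt_iff_lt, neg_lt_neg_iff]
  exact hP.apply_unitTime_zero_ne.symm.lt_or_gt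

end IsPoincare

lemma IsScaling.comp_neg {D : Pt → Pt} (hD : IsScaling D) : IsScaling (D ∘ Neg.neg) := by
  obtain ⟨a, ha, hD⟩ := hD
  exact ⟨-a, neg_ne_zero.mpr ha, fun p => by simp [hD]⟩

lemma setComp_mono_right {H G G' : Set (Pt → Pt)} (h : G ⊆ G') : setComp H G ⊆ setComp H G' :=
  fun _ ⟨D, hD, P, hP, hf⟩ => ⟨D, hD, P, h hP, hf⟩

/-- Scal∘Poi = Scal∘Poi↑. -/
theorem scalPoi_eq_scalPoiUp : setComp Scal Poi = setComp Scal PoiUp := by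
  refine Set.Subset.antisymm ?_ (setComp_mono_right fun _ hP => hP.1)
  rintro _ ⟨D, hD, P, hP, rfl⟩
  rcases hP.orthochronous_or_neg with hor | hor
  · exact ⟨D, hD, P, ⟨hP, hor⟩, rfl⟩
  · refine ⟨D ∘ Neg.neg, hD.comp_neg, -P, ⟨hP.neg, hor⟩, ?_⟩
    funext p
    simp
end
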